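/- arXiv:0806.0933 — 8 statements merged into one kernel-verified Lean document; each statement's English description precedes it below -/
import Mathlib

section
/- For every integer n ≥ 3 and every integer ℓ ≥ 4 that is not divisible by 3, there exists an oriented graph G on n vertices with minimum semidegree δ⁰(G) = ⌊n/3⌋ that contains no ℓ-cycle. (Such a G is given by partitioning the n vertices into three classes V₁, V₂, V₃ of sizes as equal as possible and adding all edges from Vᵢ to V_{i+1}, indices modulo 3.) -/
/-- An oriented graph: a digraph (relation) with no loops and no pair of
antiparallel edges. -/
def IsOrientedGraph {V : Type*} (E : V → V → Prop) : Prop :=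
  ∀ x y, E x y → ¬ E y x

/-- The outdegree `d⁺(x)` of a vertex. -/
noncomputable def outDeg {V : Type*} (E : V → V → Prop) (x : V) : ℕ :=
  Nat.card {y // E x y}

/-- The indegree `d⁻(x)` of a vertex. -/
noncomputable def inDeg {V : Type*} (E : V → V → Prop) (x : V) : ℕ :=
  Nat.card {y // E y x}

/-- The minimum semidegree `δ⁰(G) = min over x of min (d⁺(x), d⁻(x))`. -/
noncomputable def minSemidegree {V : Type*} (E : V → V → Prop) : ℕ :=
  sInf (Set.range fun x => min (outDeg E x) (inDeg E x))

/-- The minimum outdegree `δ⁺(G)`. -/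
noncomputable def minOutdegree {V : Type*} (E : V → V → Prop) : ℕ :=
  sInf (Set.range fun x => outDeg E x)

/-- `G` contains a directed cycle of length `ℓ`: distinct vertices
`v₀, …, v_{ℓ-1}` (indexed cyclically) with all consecutive edges present. -/
def HasCycle {V : Type*} (E : V → V → Prop) (ℓ : ℕ) : Prop :=
  ∃ v : ZMod ℓ → V, Function.Injective v ∧ ∀ i, E (v i) (v (i + 1))

/-- `G` contains a directed `ℓ`-cycle through the vertex `u`. -/
def HasCycleThrough {V : Type*} (E : V → V → Prop) (ℓ : ℕ) (u : V) : Prop :=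
  ∃ v : ZMod ℓ → V, Function.Injective v ∧ (∀ i, E (v i) (v (i + 1))) ∧ ∃ i, v i = u


lemma count_mod3 (n r : ℕ) (hr : r < 3) :
    ((Finset.range n).filter fun k => k % 3 = r).card = (n + 2 - r) / 3 := by
  induction n with
  | zero => simp; omega
  | succ n ih =>
    rw [Finset.range_add_one, Finset.filter_insert]
    by_cases h : n % 3 = r
    · rw [if_pos h, Finset.card_insert_of_notMem (by simp), ih]
      omega
    · rw [if_neg h, ih]; omega

lemma card_residue (n r : ℕ) (hr : r < 3) :
    Nat.card {y : Fin n // y.val % 3 = r} = (n + 2 - r) / 3 := by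
  rw [Nat.card_eq_fintype_card, Fintype.card_subtype, ← count_mod3 n r hr]
  apply Finset.card_bij (fun a _ => a.val)
  · intro a ha
    simp only [Finset.mem_filter, Finset.mem_range, Finset.mem_univ, true_and] at ha ⊢
    exact ⟨a.isLt, ha⟩
  · intro a _ b _ h; exact Fin.val_injective h
  · intro b hb; simp at hb; exact ⟨⟨b, hb.1⟩, by simp [hb.2], rfl⟩

theorem aux_extremal (n ℓ : ℕ) (hn : 3 ≤ n) (hℓ : 4 ≤ ℓ)
    (h3 : ¬ (3 ∣ ℓ)) :
    ∃ E : Fin n → Fin n → Prop, (∀ x y, E x y → ¬ E y x) ∧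
      (sInf (Set.range fun x => min (Nat.card {y // E x y}) (Nat.card {y // E y x})) = n / 3) ∧
      ¬ ∃ v : ZMod ℓ → Fin n, Function.Injective v ∧ ∀ i, E (v i) (v (i + 1)) := by
  refine ⟨fun x y => y.val % 3 = (x.val % 3 + 1) % 3, ?_, ?_, ?_⟩
  · intro x y hxy hyx; omega
  · have hout : ∀ x : Fin n, Nat.card {y : Fin n // y.val % 3 = (x.val % 3 + 1) % 3}
        = (n + 2 - (x.val % 3 + 1) % 3) / 3 := fun x => card_residue n _ (by omega)
    have hin : ∀ x : Fin n, Nat.card {y : Fin n // x.val % 3 = (y.val % 3 + 1) % 3}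
        = (n + 2 - (x.val % 3 + 2) % 3) / 3 := by
      intro x
      rw [Nat.card_congr (Equiv.subtypeEquivRight (q := fun y : Fin n =>
        y.val % 3 = (x.val % 3 + 2) % 3) (fun y => by constructor <;> (intro h; omega)))]
      exact card_residue n _ (by omega)
    apply le_antisymm
    · have hx1 : (1 : ℕ) < n := by omega
      refine le_trans (Nat.sInf_le ⟨⟨1, hx1⟩, rfl⟩) ?_
      have h1 : (⟨1, hx1⟩ : Fin n).val = 1 := rfl
      beta_reduce
      rw [hout, hin, h1]
      omega
    · refine le_csInf ⟨_, ⟨⟨0, by omega⟩, rfl⟩⟩ ?_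
      rintro _ ⟨x, rfl⟩
      beta_reduce
      rw [hout, hin]
      have := x.isLt
      omega
  · rintro ⟨v, hv, he⟩
    have key : ∀ k : ℕ, (v (k : ZMod ℓ)).val % 3 = ((v 0).val + k) % 3 := by
      intro k
      induction k with
      | zero => simp
      | succ k ih =>
        have := he (k : ZMod ℓ)
        push_cast
        rw [this, ih]
        omega
    have := key ℓ
    rw [ZMod.natCast_self] at this
    omega


theorem extremal_example_no_ell_cycle (n ℓ : ℕ) (hn : 3 ≤ n) (hℓ : 4 ≤ ℓ)
    (h3 : ¬ (3 ∣ ℓ)) :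
    ∃ E : Fin n → Fin n → Prop, IsOrientedGraph E ∧
      minSemidegree E = n / 3 ∧ ¬ HasCycle E ℓ := by
  exact aux_extremal n ℓ hn hℓ h3
end

section
/- Let ℓ ≥ 6 be an integer divisible by 3. For infinitely many integers n there exists an oriented graph G on n vertices with minimum semidegree δ⁰(G) = ⌊(n−1)/3⌋ and a vertex u of G such that no ℓ-cycle of G contains u. -/
lemma card_helper_aux (n a b : ℕ) (hb : b ≤ n) :
    Nat.card {y : Fin n // a ≤ y.val ∧ y.val < b} = b - a := by
  have e : {y : Fin n // a ≤ y.val ∧ y.val < b} ≃ {x : ℕ // x ∈ Finset.Ico a b} :=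
    { toFun := fun y => ⟨y.1.val, Finset.mem_Ico.mpr y.2⟩
      invFun := fun x => ⟨⟨x.1, lt_of_lt_of_le (Finset.mem_Ico.mp x.2).2 hb⟩,
        Finset.mem_Ico.mp x.2⟩
      left_inv := fun y => rfl
      right_inv := fun x => rfl }
  rw [Nat.card_congr e, Nat.card_eq_fintype_card, Fintype.card_coe, Nat.card_Ico]

theorem extremal_example_no_ell_cycle_through_vertex (ℓ : ℕ) (hℓ : 6 ≤ ℓ) (h3 : 3 ∣ ℓ) :
    ∀ N : ℕ, ∃ n, N ≤ n ∧ ∃ E : Fin n → Fin n → Prop, IsOrientedGraph E ∧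
      minSemidegree E = (n - 1) / 3 ∧ ∃ u : Fin n, ¬ HasCycleThrough E ℓ u := by
  intro N
  set m := N + 1 with hm
  set E : Fin (3*m+1) → Fin (3*m+1) → Prop := fun x y =>
    (m ≤ x.val ∧ x.val < 2*m ∧ y.val < m) ∨
    (x.val < m ∧ 2*m < y.val) ∨
    (2*m < x.val ∧ m ≤ y.val ∧ y.val ≤ 2*m) ∨
    (x.val = 2*m ∧ m ≤ y.val ∧ y.val < 2*m) with hE
  refine ⟨3*m+1, by omega, E, ?_, ?_, ?_⟩
  · intro x y h h'
    simp only [hE] at h h'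
    omega
  · -- min semidegree
    have degOut : ∀ (x : Fin (3*m+1)) (a b : ℕ), b ≤ 3*m+1 →
        (∀ y : Fin (3*m+1), E x y ↔ (a ≤ y.val ∧ y.val < b)) → outDeg E x = b - a := by
      intro x a b hb h
      unfold outDeg
      rw [Nat.card_congr (Equiv.subtypeEquivRight h), card_helper_aux _ a b hb]
    have degIn : ∀ (x : Fin (3*m+1)) (a b : ℕ), b ≤ 3*m+1 →
        (∀ y : Fin (3*m+1), E y x ↔ (a ≤ y.val ∧ y.val < b)) → inDeg E x = b - a := by
      intro x a b hb h
      unfold inDeg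
      rw [Nat.card_congr (Equiv.subtypeEquivRight h), card_helper_aux _ a b hb]
    have key : ∀ x : Fin (3*m+1), min (outDeg E x) (inDeg E x) = m := by
      intro x
      have hx := x.isLt
      rcases lt_or_ge x.val m with h1 | h1
      · -- B vertex
        rw [degOut x (2*m+1) (3*m+1) (by omega)
            (fun y => by simp only [hE]; have := y.isLt; omega),
          degIn x m (2*m) (by omega)
            (fun y => by simp only [hE]; have := y.isLt; omega)]
        omega
      rcases lt_or_ge x.val (2*m) with h2 | h2
      · -- A vertex
        rw [degOut x 0 m (by omega)
            (fun y => by simp only [hE]; have := y.isLt; omega),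
          degIn x (2*m) (3*m+1) (by omega)
            (fun y => by simp only [hE]; have := y.isLt; omega)]
        omega
      rcases eq_or_lt_of_le h2 with h3 | h3
      · -- u vertex
        rw [degOut x m (2*m) (by omega)
            (fun y => by simp only [hE]; have := y.isLt; omega),
          degIn x (2*m+1) (3*m+1) (by omega)
            (fun y => by simp only [hE]; have := y.isLt; omega)]
        omega
      · -- C vertex
        rw [degOut x m (2*m+1) (by omega)
            (fun y => by simp only [hE]; have := y.isLt; omega),
          degIn x 0 m (by omega)
            (fun y => by simp only [hE]; have := y.isLt; omega)]
        omega
    unfold minSemidegree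
    have hr : (Set.range fun x : Fin (3*m+1) => min (outDeg E x) (inDeg E x)) = {m} := by
      apply Set.eq_singleton_iff_unique_mem.mpr
      exact ⟨⟨⟨0, by omega⟩, key _⟩, by rintro k ⟨x, rfl⟩; exact key x⟩
    rw [hr, csInf_singleton]
    omega
  · -- no ℓ-cycle through u
    refine ⟨⟨2*m, by omega⟩, ?_⟩
    rintro ⟨v, hinj, hedge, i, hvi⟩
    haveI : NeZero ℓ := ⟨by omega⟩
    set g : Fin (3*m+1) → ZMod 3 := fun x =>
      if x.val < m then 1 else if x.val < 2*m then 0 else 2 with hg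
    have hstep : ∀ x y, E x y → y.val ≠ 2*m → g y = g x + 1 := by
      intro x y hxy hy
      simp only [hE] at hxy
      rcases hxy with h | h | h | h
      · have hgx : g x = 0 := by simp only [hg]; rw [if_neg (by omega), if_pos (by omega)]
        have hgy : g y = 1 := by simp only [hg]; rw [if_pos (by omega)]
        rw [hgx, hgy]; decide
      · have hgx : g x = 1 := by simp only [hg]; rw [if_pos (by omega)]
        have hgy : g y = 2 := by simp only [hg]; rw [if_neg (by omega), if_neg (by omega)]
        rw [hgx, hgy]; decide
      · have hgx : g x = 2 := by simp only [hg]; rw [if_neg (by omega), if_neg (by omega)]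
        have hgy : g y = 0 := by simp only [hg]; rw [if_neg (by omega), if_pos (by omega)]
        rw [hgx, hgy]; decide
      · have hgx : g x = 2 := by simp only [hg]; rw [if_neg (by omega), if_neg (by omega)]
        have hgy : g y = 0 := by simp only [hg]; rw [if_neg (by omega), if_pos (by omega)]
        rw [hgx, hgy]; decide
    have hgu : g (v i) = 2 := by
      rw [hvi]; simp only [hg]; rw [if_neg (by omega), if_neg (by omega)]
    have hinto : ∀ x, E x (v i) → g x = 2 := by
      intro x hx
      rw [hvi] at hx
      simp only [hE] at hx
      simp only [hg]
      rw [if_neg (by omega), if_neg (by omega)]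
    have claim : ∀ k : ℕ, k < ℓ →
        g (v (i + (k : ZMod ℓ))) = g (v i) + (k : ZMod 3) := by
      intro k
      induction k with
      | zero => intro _; simp
      | succ k ih =>
        intro hk
        have hk' : k < ℓ := by omega
        have hne : (v (i + (k : ZMod ℓ) + 1)).val ≠ 2*m := by
          intro hval
          have hvv : v (i + (k : ZMod ℓ) + 1) = v i := by
            rw [hvi]; exact Fin.ext hval
          have := hinj hvv
          have hz : ((k + 1 : ℕ) : ZMod ℓ) = 0 := by
            push_cast
            linear_combination this
          rw [ZMod.natCast_eq_zero_iff] at hz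
          have := Nat.le_of_dvd (by omega) hz
          omega
        have h5 := hstep _ _ (hedge (i + (k : ZMod ℓ))) hne
        rw [Nat.cast_add, Nat.cast_one, ← add_assoc, h5, ih hk']
        push_cast
        ring
    have hlast := claim (ℓ - 1) (by omega)
    have hwrap : i + ((ℓ - 1 : ℕ) : ZMod ℓ) + 1 = i := by
      have h1 : (((ℓ - 1 : ℕ) : ZMod ℓ)) + 1 = (((ℓ - 1) + 1 : ℕ) : ZMod ℓ) := by
        push_cast; ring
      rw [add_assoc, h1, Nat.sub_add_cancel (by omega : 1 ≤ ℓ), ZMod.natCast_self, add_zero]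
    have hedge' := hedge (i + ((ℓ - 1 : ℕ) : ZMod ℓ))
    rw [hwrap] at hedge'
    have h2 := hinto _ hedge'
    rw [hlast, hgu] at h2
    have hz : ((ℓ - 1 : ℕ) : ZMod 3) = 0 := by linear_combination h2
    rw [ZMod.natCast_eq_zero_iff] at hz
    omega
end

section
/- If G is an oriented graph on n vertices with minimum semidegree δ⁰(G) ≥ ⌈2n/5⌉, then for every vertex u of G there exists a 3-cycle of G containing u. -/
/-!
Suppose no triangle passes through `u`, and let `A = N⁺(u)`, `B = N⁻(u)`. Then no out-neighbour
of a vertex `x ∈ A` lies in `B ∪ {u}`, so it lies in `A` or in the remaining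
`n - 1 - |A| - |B|` vertices. Since `A` spans an oriented graph, some `x ∈ A` has at most
`(|A| - 1) / 2` out-neighbours inside `A`. With `δ = δ⁰(G)` this gives
`2δ ≤ |A| - 1 + 2(n - 1 - |A| - |B|) ≤ 2n - 3 - 3δ`, i.e. `5δ < 2n`, contradicting `δ ≥ 2n/5`.
-/

open Finset

section OrientedGraph

variable {V : Type*} (E : V → V → Prop)

theorem minSemidegree_le_outDeg (x : V) : minSemidegree E ≤ outDeg E x :=
  (Nat.sInf_le (Set.mem_range_self x)).trans (min_le_left _ _)

theorem minSemidegree_le_inDeg (x : V) : minSemidegree E ≤ inDeg E x :=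
  (Nat.sInf_le (Set.mem_range_self x)).trans (min_le_right _ _)

variable {E}

section Finite

variable [Fintype V] [DecidableRel E]

theorem outDeg_eq_card_filter (x : V) : outDeg E x = #{y | E x y} := by
  rw [outDeg, Nat.card_eq_fintype_card, Fintype.card_subtype]

theorem inDeg_eq_card_filter (x : V) : inDeg E x = #{y | E y x} := by
  rw [inDeg, Nat.card_eq_fintype_card, Fintype.card_subtype]

end Finite

namespace IsOrientedGraph

theorem ne_of_adj (hG : IsOrientedGraph E) {x y : V} (hxy : E x y) : x ≠ y := by
  rintro rfl
  exact hG x x hxy hxy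

theorem hasCycleThrough_three (hG : IsOrientedGraph E) {u x y : V}
    (hux : E u x) (hxy : E x y) (hyu : E y u) : HasCycleThrough E 3 u := by
  have hyu_ne : y ≠ u := by
    rintro rfl
    exact hG _ _ hux hxy
  refine ⟨![u, x, y], ?_, ?_, 0, rfl⟩
  · intro i j hij
    fin_cases i <;> fin_cases j <;>
      first
      | rfl
      | simp_all [hG.ne_of_adj hux, (hG.ne_of_adj hux).symm, hG.ne_of_adj hxy,
          (hG.ne_of_adj hxy).symm, hyu_ne.symm]
  · intro i
    fin_cases i <;> simpa

theorem exists_two_mul_card_outNbrs_le [DecidableRel E] (hG : IsOrientedGraph E)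
    {A : Finset V} (hA : A.Nonempty) : ∃ x ∈ A, 2 * #{y ∈ A | E x y} ≤ #A - 1 := by
  classical
  have hx : ∀ x ∈ A, #{y ∈ A | E x y} + #{y ∈ A | E y x} ≤ #A - 1 := by
    intro x hxA
    rw [← card_union_of_disjoint, ← card_erase_of_mem hxA]
    · refine card_le_card fun y hy => ?_
      simp only [mem_union, mem_filter] at hy
      rcases hy with ⟨hyA, hxy⟩ | ⟨hyA, hyx⟩
      · exact mem_erase.2 ⟨(hG.ne_of_adj hxy).symm, hyA⟩
      · exact mem_erase.2 ⟨hG.ne_of_adj hyx, hyA⟩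
    · exact disjoint_filter.2 fun y _ hxy hyx => hG x y hxy hyx
  have hdouble : ∑ x ∈ A, #{y ∈ A | E y x} = ∑ x ∈ A, #{y ∈ A | E x y} :=
    (sum_card_bipartiteAbove_eq_sum_card_bipartiteBelow (r := E) (s := A) (t := A)).symm
  refine exists_le_of_sum_le hA ?_
  calc ∑ x ∈ A, 2 * #{y ∈ A | E x y}
      = ∑ x ∈ A, (#{y ∈ A | E x y} + #{y ∈ A | E y x}) := by
        rw [sum_add_distrib, hdouble, ← mul_sum, two_mul]
    _ ≤ ∑ _x ∈ A, (#A - 1) := sum_le_sum hx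

/-- Inclusion–exclusion for `N⁺(x)` and `{u} ∪ N⁺(u) ∪ N⁻(u)`: without triangles through `u`
their intersection is just `N⁺(x) ∩ N⁺(u)`. -/
theorem outDeg_add_le_of_forall_not_triangle [Fintype V] [DecidableRel E]
    (hG : IsOrientedGraph E) {u x : V} (hno : ∀ a b, E u a → E a b → ¬ E b u) (hux : E u x) :
    outDeg E x + #{y | E u y} + #{y | E y u} + 1 ≤
      Fintype.card V + #{y ∈ ({y | E u y} : Finset V) | E x y} := by
  classical
  set A : Finset V := {y | E u y}
  set B : Finset V := {y | E y u}
  have hS : #(insert u (A ∪ B)) = #A + #B + 1 := by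
    rw [card_insert_of_notMem, card_union_of_disjoint]
    · exact disjoint_filter.2 fun y _ huy hyu => hG u y huy hyu
    · simpa [A, B] using fun h : E u u => hG u u h h
  have hinter : ({y | E x y} : Finset V) ∩ insert u (A ∪ B) = {y ∈ A | E x y} := by
    ext y
    simp only [A, B, mem_inter, mem_insert, mem_union, mem_filter, mem_univ, true_and]
    constructor
    · rintro ⟨hxy, hy | hy | hy⟩
      · exact absurd (hy ▸ hux) (hG x y hxy)
      · exact ⟨hy, hxy⟩
      · exact absurd hy (hno x y hux hxy)
    · exact fun ⟨hy, hxy⟩ => ⟨hxy, Or.inr (Or.inl hy)⟩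
  have key := card_union_add_card_inter ({y | E x y} : Finset V) (insert u (A ∪ B))
  rw [hinter, hS, ← outDeg_eq_card_filter] at key
  have := card_le_univ (({y | E x y} : Finset V) ∪ insert u (A ∪ B))
  omega

end IsOrientedGraph

end OrientedGraph

theorem two_mul_le_five_mul_of_ceil_le {n d : ℕ} (h : ⌈(2 * (n : ℚ)) / 5⌉₊ ≤ d) :
    2 * n ≤ 5 * d := by
  have h' := (div_le_iff₀ (by norm_num : (0 : ℚ) < 5)).1 (Nat.ceil_le.1 h)
  exact_mod_cast (by linarith : (2 * n : ℚ) ≤ 5 * d)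

theorem triangle_through_every_vertex (V : Type*) [Fintype V] (E : V → V → Prop)
    (hG : IsOrientedGraph E)
    (hδ : ⌈(2 * (Fintype.card V : ℚ)) / 5⌉₊ ≤ minSemidegree E) :
    ∀ u : V, HasCycleThrough E 3 u := by
  classical
  intro u
  by_contra hcycle
  have hno : ∀ x y, E u x → E x y → ¬ E y u :=
    fun x y hux hxy hyu => hcycle (hG.hasCycleThrough_three hux hxy hyu)
  have h5 := two_mul_le_five_mul_of_ceil_le hδ
  have hn : 0 < Fintype.card V := Fintype.card_pos_iff.2 ⟨u⟩
  have hA := (minSemidegree_le_outDeg E u).trans_eq (outDeg_eq_card_filter u)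
  have hB := (minSemidegree_le_inDeg E u).trans_eq (inDeg_eq_card_filter u)
  obtain ⟨x, hxA, hx⟩ :=
    hG.exists_two_mul_card_outNbrs_le (A := {y | E u y}) (card_pos.1 (by omega))
  have hux : E u x := (mem_filter.1 hxA).2
  have hxout := hG.outDeg_add_le_of_forall_not_triangle hno hux
  have := minSemidegree_le_outDeg E x
  omega
end

section
/- For infinitely many integers n there exists an oriented graph G on n vertices with minimum semidegree δ⁰(G) = ⌊2n/5⌋ containing a vertex u that does not lie on any 3-cycle of G. -/
/-!
Take a vertex `u` and disjoint sets `A`, `B` of size `2m + 1` and `C` of size `m + 1`, put a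
regular tournament on each of `A` and `B`, and add all edges `u → A`, `B → u`, `B → A`, `A → C`
and `C → B`. On these `n = 5m + 4` vertices every vertex `x` has `min (d⁺ x) (d⁻ x) = 2m + 1`,
which is `⌊2n/5⌋`. A 3-cycle through `u` would have to run `u → A → A ∪ C → u`, but only
vertices of `B` send edges to `u`.
-/

open Function

lemma Nat.card_subtype_option {α : Type*} [Finite α] (p : Option α → Prop) :
    Nat.card {y // p y} = Nat.card {a // p (some a)} + Nat.card {_u : Unit // p none} := by
  rw [← Nat.card_sum]
  exact Nat.card_congr
    { toFun := fun | ⟨some a, h⟩ => .inl ⟨a, h⟩ | ⟨none, h⟩ => .inr ⟨(), h⟩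
      invFun := fun | .inl a => ⟨some a.1, a.2⟩ | .inr u => ⟨none, u.2⟩
      left_inv := by rintro ⟨_ | a, h⟩ <;> rfl
      right_inv := by rintro (a | u) <;> rfl }

lemma Nat.card_subtype_sum {α β : Type*} [Finite α] [Finite β] (p : α ⊕ β → Prop) :
    Nat.card {x // p x} = Nat.card {a // p (.inl a)} + Nat.card {b // p (.inr b)} := by
  rw [Nat.card_congr Equiv.subtypeSum, Nat.card_sum]

section Comap

variable {V W : Type*} {E : W → W → Prop}

lemma IsOrientedGraph.comap (f : V → W) (h : IsOrientedGraph E) :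
    IsOrientedGraph fun x y => E (f x) (f y) :=
  fun x y => h (f x) (f y)

lemma outDeg_comap_equiv (e : V ≃ W) (x : V) :
    outDeg (fun x y => E (e x) (e y)) x = outDeg E (e x) :=
  Nat.card_congr (e.subtypeEquiv fun _ => Iff.rfl)

lemma inDeg_comap_equiv (e : V ≃ W) (x : V) :
    inDeg (fun x y => E (e x) (e y)) x = inDeg E (e x) :=
  Nat.card_congr (e.subtypeEquiv fun _ => Iff.rfl)

lemma minSemidegree_comap_equiv (e : V ≃ W) :
    minSemidegree (fun x y => E (e x) (e y)) = minSemidegree E := by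
  simp only [minSemidegree, outDeg_comap_equiv, inDeg_comap_equiv]
  exact congrArg sInf (e.surjective.range_comp fun w => min (outDeg E w) (inDeg E w))

lemma HasCycleThrough.of_comap {f : V → W} (hf : Injective f) {ℓ : ℕ} {u : V}
    (h : HasCycleThrough (fun x y => E (f x) (f y)) ℓ u) : HasCycleThrough E ℓ (f u) := by
  obtain ⟨v, hv, hE, i, rfl⟩ := h
  exact ⟨f ∘ v, hf.comp hv, hE, i, rfl⟩

end Comap

lemma minSemidegree_eq_of_forall {V : Type*} [Nonempty V] {E : V → V → Prop} {d : ℕ}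
    (h : ∀ x, min (outDeg E x) (inDeg E x) = d) : minSemidegree E = d := by
  rw [minSemidegree, funext h, Set.range_const, csInf_singleton]

lemma HasCycleThrough.exists_three {V : Type*} {E : V → V → Prop} {u : V}
    (h : HasCycleThrough E 3 u) : ∃ x y, E u x ∧ E x y ∧ E y u := by
  obtain ⟨v, -, hE, i, rfl⟩ := h
  have hi : i + 1 + 1 + 1 = i := by revert i; decide
  exact ⟨v (i + 1), v (i + 1 + 1), hE i, hE (i + 1), by simpa only [hi] using hE (i + 1 + 1)⟩

instance (m : ℕ) : NeZero (2 * m + 1) := ⟨by omega⟩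

def circulantTournament (m : ℕ) (i j : ZMod (2 * m + 1)) : Prop :=
  1 ≤ (j - i).val ∧ (j - i).val ≤ m

namespace circulantTournament

lemma asymm {m : ℕ} {i j : ZMod (2 * m + 1)} (h : circulantTournament m i j) :
    ¬ circulantTournament m j i := by
  obtain ⟨h1, h2⟩ := h
  have hne : j - i ≠ 0 := fun hz => by simp [hz] at h1
  rw [circulantTournament, ← neg_sub, ZMod.neg_val, if_neg hne]
  have := ZMod.val_lt (j - i)
  omega

lemma card_val_mem_Icc (m : ℕ) :
    Nat.card {d : ZMod (2 * m + 1) // 1 ≤ d.val ∧ d.val ≤ m} = m := by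
  change Nat.card {d : Fin (2 * m + 1) // 1 ≤ (d : ℕ) ∧ (d : ℕ) ≤ m} = m
  have e : {d : Fin (2 * m + 1) // 1 ≤ (d : ℕ) ∧ (d : ℕ) ≤ m} ≃ Set.Icc 1 m :=
    { toFun d := ⟨d, d.2⟩
      invFun k := ⟨⟨k, by have := k.2.2; omega⟩, k.2⟩
      left_inv _ := rfl
      right_inv _ := rfl }
  rw [Nat.card_congr e]
  simp

lemma card_out (m : ℕ) (i : ZMod (2 * m + 1)) : Nat.card {j // circulantTournament m i j} = m :=
  (Nat.card_congr ((Equiv.subRight i).subtypeEquiv fun _ => Iff.rfl)).trans (card_val_mem_Icc m)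

lemma card_in (m : ℕ) (i : ZMod (2 * m + 1)) : Nat.card {j // circulantTournament m j i} = m :=
  (Nat.card_congr ((Equiv.subLeft i).subtypeEquiv fun _ => Iff.rfl)).trans (card_val_mem_Icc m)

end circulantTournament

/-- `none` is the vertex `u`; the three summands are `A`, `B` and `C`. -/
abbrev ExtremalVertex (m : ℕ) := Option (ZMod (2 * m + 1) ⊕ ZMod (2 * m + 1) ⊕ Fin (m + 1))

def extremalGraph (m : ℕ) : ExtremalVertex m → ExtremalVertex m → Prop
  | none, some (.inl _) => True
  | some (.inr (.inl _)), none => True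
  | some (.inr (.inl _)), some (.inl _) => True
  | some (.inl _), some (.inr (.inr _)) => True
  | some (.inr (.inr _)), some (.inr (.inl _)) => True
  | some (.inl i), some (.inl j) => circulantTournament m i j
  | some (.inr (.inl i)), some (.inr (.inl j)) => circulantTournament m i j
  | _, _ => False

namespace extremalGraph

lemma card_vertex (m : ℕ) : Fintype.card (ExtremalVertex m) = 5 * m + 4 := by
  simp only [Fintype.card_option, Fintype.card_sum, ZMod.card, Fintype.card_fin]
  omega

lemma isOrientedGraph (m : ℕ) : IsOrientedGraph (extremalGraph m) := by
  rintro (_ | _ | _ | _) (_ | _ | _ | _) h h' <;>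
    first | exact h | exact h' | exact circulantTournament.asymm h h'

lemma min_outDeg_inDeg (m : ℕ) (x : ExtremalVertex m) :
    min (outDeg (extremalGraph m) x) (inDeg (extremalGraph m) x) = 2 * m + 1 := by
  rcases x with _ | _ | _ | _ <;>
    simp only [outDeg, inDeg, extremalGraph, Nat.card_subtype_option, Nat.card_subtype_sum,
      circulantTournament.card_out, circulantTournament.card_in, Nat.card_eq_fintype_card,
      Fintype.card_subtype_true, Fintype.card_eq_zero, Fintype.card_unique, Fintype.card_fin,
      ZMod.card, add_zero, zero_add] <;>
    omega

lemma not_hasCycleThrough_three_none (m : ℕ) : ¬ HasCycleThrough (extremalGraph m) 3 none := by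
  intro h
  obtain ⟨x, y, hux, hxy, hyu⟩ := h.exists_three
  rcases x with _ | _ | _ | _ <;> rcases y with _ | _ | _ | _ <;> assumption

end extremalGraph

theorem extremal_example_no_triangle_through_vertex :
    ∀ N : ℕ, ∃ n, N ≤ n ∧ ∃ E : Fin n → Fin n → Prop, IsOrientedGraph E ∧
      minSemidegree E = 2 * n / 5 ∧ ∃ u : Fin n, ¬ HasCycleThrough E 3 u := by
  intro m
  let e := Fintype.equivFinOfCardEq (extremalGraph.card_vertex m)
  refine ⟨5 * m + 4, by omega, fun x y => extremalGraph m (e.symm x) (e.symm y),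
    (extremalGraph.isOrientedGraph m).comap _, ?_, e none, ?_⟩
  · rw [minSemidegree_comap_equiv, minSemidegree_eq_of_forall (extremalGraph.min_outDeg_inDeg m)]
    omega
  · intro h
    exact extremalGraph.not_hasCycleThrough_three_none m (e.symm_apply_apply none ▸ h.of_comap e.symm.injective)
end

section
/- If G is an oriented graph on n ≥ 5 vertices with minimum semidegree δ⁰(G) ≥ ⌊n/3⌋ + 1, then for every vertex x of G, G contains a 5-cycle through x. -/
/-!
Fix `x`, let `A = N⁺(x)`, `B = N⁻(x)`, and let `X = N⁺(A)` and `Y = N⁻(B)` be the second out- and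
in-neighbourhoods of `x`. In an oriented graph a closed walk of length 5 has distinct vertices, so
it suffices to find an edge from `X` to `Y`. Suppose there is none. With `d = ⌊n/3⌋ + 1` we have
`3d > n`, so there are no three pairwise disjoint sets of size `≥ d`; applied to suitable
neighbourhoods this shows that some vertex of `A` lies in `X \ Y`. Out-neighbours of such a vertex
lie in `X \ (Y ∪ B)`, so the vertex of `T = A ∩ (X \ Y)` with fewest out-neighbours inside `T`
gives `2d + 1 ≤ |A| + 2 |X \ (Y ∪ A ∪ B)|`. Adding the same bound for the reversed graph gives
`6d + 4 ≤ 2n`.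
-/

open Finset
open scoped Classical

section

variable {V : Type*} {E : V → V → Prop} {d : ℕ}

lemma minSemidegree_flip (E : V → V → Prop) : minSemidegree (flip E) = minSemidegree E := by
  simp only [minSemidegree, outDeg, inDeg, flip, min_comm]

lemma IsOrientedGraph.flip (hE : IsOrientedGraph E) : IsOrientedGraph (flip E) :=
  fun _ _ h h' => hE _ _ h' h

lemma IsOrientedGraph.exists_two_mul_card_filter_add_one_le (hE : IsOrientedGraph E)
    {S : Finset V} (hS : S.Nonempty) : ∃ a ∈ S, 2 * #{b ∈ S | E a b} + 1 ≤ #S := by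
  have hdeg : ∀ a ∈ S, #{b ∈ S | E a b} + #{b ∈ S | E b a} + 1 ≤ #S := by
    intro a ha
    have hdisj : Disjoint {b ∈ S | E a b} {b ∈ S | E b a} :=
      disjoint_filter.2 fun b _ hab hba => hE a b hab hba
    have hsub : {b ∈ S | E a b} ∪ {b ∈ S | E b a} ⊆ S.erase a := by
      intro b hb
      simp only [mem_union, mem_filter, mem_erase] at hb ⊢
      rcases hb with ⟨hb, hab⟩ | ⟨hb, hba⟩
      · exact ⟨by rintro rfl; exact hE b b hab hab, hb⟩
      · exact ⟨by rintro rfl; exact hE b b hba hba, hb⟩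
    have := card_le_card hsub
    rw [card_union_of_disjoint hdisj, card_erase_of_mem ha] at this
    have := card_pos.2 hS
    omega
  have hcount : ∑ a ∈ S, #{b ∈ S | E a b} = ∑ a ∈ S, #{b ∈ S | E b a} :=
    sum_card_bipartiteAbove_eq_sum_card_bipartiteBelow E
  refine exists_le_of_sum_le hS ?_
  calc ∑ a ∈ S, (2 * #{b ∈ S | E a b} + 1)
      = ∑ a ∈ S, (#{b ∈ S | E a b} + #{b ∈ S | E b a} + 1) := by
        simp only [sum_add_distrib, ← hcount, ← mul_sum]; ring
    _ ≤ ∑ _a ∈ S, #S := sum_le_sum hdeg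

/- Two positions of a closed 5-walk are at cyclic distance 1 or 2, and an oriented graph has
neither loops nor 2-cycles. -/
lemma IsOrientedGraph.injective_of_closedWalk_five (hE : IsOrientedGraph E) {v : ZMod 5 → V}
    (hv : ∀ i, E (v i) (v (i + 1))) : Function.Injective v := by
  have hne₁ : ∀ i, v (i + 1) ≠ v i := fun i h => hE _ _ (hv i) (h ▸ hv i)
  have hne₂ : ∀ i, v (i + 2) ≠ v i := fun i h => by
    have := hv (i + 1)
    rw [add_assoc, one_add_one_eq_two, h] at this
    exact hE _ _ (hv i) this
  intro i j hij
  obtain ⟨k, rfl⟩ : ∃ k, j = i + k := ⟨j - i, by ring⟩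
  rcases (by decide : ∀ k : ZMod 5, k = 0 ∨ k = 1 ∨ k = 2 ∨ k = 3 ∨ k = 4) k with
    rfl | rfl | rfl | rfl | rfl
  · exact (add_zero i).symm
  · exact absurd hij.symm (hne₁ i)
  · exact absurd hij.symm (hne₂ i)
  · have := hne₂ (i + 3)
    rw [add_assoc, show (3 + 2 : ZMod 5) = 0 from rfl, add_zero] at this
    exact absurd hij this
  · have := hne₁ (i + 4)
    rw [add_assoc, show (4 + 1 : ZMod 5) = 0 from rfl, add_zero] at this
    exact absurd hij this

lemma IsOrientedGraph.hasCycleThrough_five (hE : IsOrientedGraph E) {x a b c s : V}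
    (hxa : E x a) (hab : E a b) (hbc : E b c) (hcs : E c s) (hsx : E s x) :
    HasCycleThrough E 5 x := by
  let v : ZMod 5 → V := ![x, a, b, c, s]
  have hv : ∀ i, E (v i) (v (i + 1)) := by
    intro i
    fin_cases i
    exacts [hxa, hab, hbc, hcs, hsx]
  exact ⟨v, hE.injective_of_closedWalk_five hv, hv, 0, rfl⟩

variable [Fintype V]

noncomputable def outNbhd (E : V → V → Prop) (v : V) : Finset V := {w | E v w}

/- In-neighbourhoods are out-neighbourhoods of the reversed graph, so that each lemma applied to
`flip E` yields its mirror image up to definitional unfolding. -/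
noncomputable def inNbhd (E : V → V → Prop) (v : V) : Finset V := outNbhd (flip E) v

noncomputable def secondOutNbhd (E : V → V → Prop) (x : V) : Finset V := {v | ∃ a, E x a ∧ E a v}

noncomputable def secondInNbhd (E : V → V → Prop) (x : V) : Finset V := secondOutNbhd (flip E) x

@[simp] lemma mem_outNbhd {v w : V} : w ∈ outNbhd E v ↔ E v w := by simp [outNbhd]

@[simp] lemma mem_inNbhd {v w : V} : w ∈ inNbhd E v ↔ E w v := by simp [inNbhd, flip]

@[simp] lemma mem_secondOutNbhd {x v : V} : v ∈ secondOutNbhd E x ↔ ∃ a, E x a ∧ E a v := by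
  simp [secondOutNbhd]

@[simp] lemma mem_secondInNbhd {x v : V} : v ∈ secondInNbhd E x ↔ ∃ s, E v s ∧ E s x := by
  simp [secondInNbhd, flip, and_comm]

lemma card_outNbhd (E : V → V → Prop) (v : V) : #(outNbhd E v) = outDeg E v := by
  rw [outDeg, Nat.card_eq_fintype_card, Fintype.card_subtype, outNbhd]

lemma le_card_outNbhd (hδ : d ≤ minSemidegree E) (v : V) : d ≤ #(outNbhd E v) := by
  rw [card_outNbhd]
  exact hδ.trans ((Nat.sInf_le (Set.mem_range_self v)).trans (min_le_left _ _))

lemma le_card_inNbhd (hδ : d ≤ minSemidegree E) (v : V) : d ≤ #(inNbhd E v) :=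
  le_card_outNbhd (by rwa [minSemidegree_flip]) v

lemma le_card_secondOutNbhd (hδ : d ≤ minSemidegree E) (hd : 0 < d) (x : V) :
    d ≤ #(secondOutNbhd E x) := by
  obtain ⟨a, ha⟩ := card_pos.1 (hd.trans_le (le_card_outNbhd hδ x))
  refine (le_card_outNbhd hδ a).trans (card_le_card fun v hv => ?_)
  simp only [mem_outNbhd, mem_secondOutNbhd] at ha hv ⊢
  exact ⟨a, ha, hv⟩

lemma le_card_secondInNbhd (hδ : d ≤ minSemidegree E) (hd : 0 < d) (x : V) :
    d ≤ #(secondInNbhd E x) :=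
  le_card_secondOutNbhd (by rwa [minSemidegree_flip]) hd x

lemma three_mul_le_card_of_disjoint {s t u : Finset V} (hs : d ≤ #s) (ht : d ≤ #t) (hu : d ≤ #u)
    (hst : Disjoint s t) (hsu : Disjoint s u) (htu : Disjoint t u) : 3 * d ≤ Fintype.card V := by
  have := card_le_univ (s ∪ t ∪ u)
  rw [card_union_of_disjoint (disjoint_union_left.2 ⟨hsu, htu⟩), card_union_of_disjoint hst] at this
  omega

namespace IsOrientedGraph

lemma disjoint_outNbhd_inNbhd (hE : IsOrientedGraph E) (v : V) :
    Disjoint (outNbhd E v) (inNbhd E v) :=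
  disjoint_left.2 fun w h h' => hE v w (mem_outNbhd.1 h) (mem_inNbhd.1 h')

lemma notMem_outNbhd_self (hE : IsOrientedGraph E) (x : V) : x ∉ outNbhd E x := fun h =>
  hE x x (mem_outNbhd.1 h) (mem_outNbhd.1 h)

lemma notMem_secondOutNbhd_self (hE : IsOrientedGraph E) (x : V) : x ∉ secondOutNbhd E x :=
  fun h => let ⟨a, hxa, hax⟩ := mem_secondOutNbhd.1 h; hE x a hxa hax

end IsOrientedGraph

noncomputable def strictSecondOutNbhd (E : V → V → Prop) (x : V) : Finset V :=
  secondOutNbhd E x \ (secondInNbhd E x ∪ outNbhd E x ∪ inNbhd E x)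

lemma mem_strictSecondOutNbhd {x v : V} : v ∈ strictSecondOutNbhd E x ↔
    v ∈ secondOutNbhd E x ∧ v ∉ secondInNbhd E x ∧ v ∉ outNbhd E x ∧ v ∉ inNbhd E x := by
  simp only [strictSecondOutNbhd, mem_sdiff, mem_union, not_or, and_assoc]

/- Throughout this section `hXY` says that there is no closed walk `x → a → b → c → s → x`. -/
section NoEdge

variable {x : V}

lemma not_secondInNbhd_subset_secondOutNbhd (hE : IsOrientedGraph E)
    (hn : Fintype.card V < 3 * d) (hδ : d ≤ minSemidegree E)
    (hXY : ∀ b ∈ secondOutNbhd E x, ∀ c ∈ secondInNbhd E x, ¬ E b c) :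
    ¬ secondInNbhd E x ⊆ secondOutNbhd E x := by
  intro hsub
  have hY := le_card_secondInNbhd hδ (by omega) x
  obtain ⟨k, hk⟩ := card_pos.1 (by omega : 0 < #(secondInNbhd E x))
  refine hn.not_ge (three_mul_le_card_of_disjoint hY (le_card_outNbhd hδ k)
    (le_card_inNbhd hδ k) ?_ ?_ (hE.disjoint_outNbhd_inNbhd k))
  · exact disjoint_left.2 fun u hu hku => hXY k (hsub hk) u hu (mem_outNbhd.1 hku)
  · exact disjoint_left.2 fun u hu huk => hXY u (hsub hu) k hk (mem_inNbhd.1 huk)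

lemma exists_mem_outNbhd_mem_secondOutNbhd (hE : IsOrientedGraph E)
    (hn : Fintype.card V < 3 * d) (hδ : d ≤ minSemidegree E)
    (hXY : ∀ b ∈ secondOutNbhd E x, ∀ c ∈ secondInNbhd E x, ¬ E b c) :
    ∃ a ∈ outNbhd E x, a ∈ secondOutNbhd E x := by
  obtain ⟨w, hwY, hwX⟩ := not_subset.1 (not_secondInNbhd_subset_secondOutNbhd hE hn hδ hXY)
  by_contra! hAX
  refine hn.not_ge (three_mul_le_card_of_disjoint (le_card_inNbhd hδ w)
    (le_card_secondOutNbhd hδ (by omega) x) (le_card_outNbhd hδ x) ?_ ?_ ?_)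
  · exact disjoint_left.2 fun u huw huX => hXY u huX w hwY (mem_inNbhd.1 huw)
  · exact disjoint_left.2 fun u huw huA =>
      hwX (mem_secondOutNbhd.2 ⟨u, mem_outNbhd.1 huA, mem_inNbhd.1 huw⟩)
  · exact disjoint_right.2 hAX

lemma exists_mem_inNbhd_notMem_secondOutNbhd (hE : IsOrientedGraph E)
    (hn : Fintype.card V < 3 * d) (hδ : d ≤ minSemidegree E)
    (hXY : ∀ b ∈ secondOutNbhd E x, ∀ c ∈ secondInNbhd E x, ¬ E b c) :
    ∃ s ∈ inNbhd E x, s ∉ secondOutNbhd E x := by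
  obtain ⟨w, hwY, hwX⟩ := not_subset.1 (not_secondInNbhd_subset_secondOutNbhd hE hn hδ hXY)
  obtain ⟨s, hsw, hsB⟩ : ∃ s ∈ inNbhd E w, s ∈ inNbhd E x := by
    by_contra! h
    refine hn.not_ge (three_mul_le_card_of_disjoint (le_card_inNbhd hδ w)
      (le_card_outNbhd hδ x) (le_card_inNbhd hδ x) ?_ (disjoint_left.2 h)
      (hE.disjoint_outNbhd_inNbhd x))
    exact disjoint_left.2 fun u huw huA =>
      hwX (mem_secondOutNbhd.2 ⟨u, mem_outNbhd.1 huA, mem_inNbhd.1 huw⟩)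
  exact ⟨s, hsB, fun hsX => hXY s hsX w hwY (mem_inNbhd.1 hsw)⟩

lemma exists_mem_outNbhd_mem_secondOutNbhd_notMem_secondInNbhd (hE : IsOrientedGraph E)
    (hn : Fintype.card V < 3 * d) (hδ : d ≤ minSemidegree E)
    (hXY : ∀ b ∈ secondOutNbhd E x, ∀ c ∈ secondInNbhd E x, ¬ E b c) :
    ∃ a ∈ outNbhd E x, a ∈ secondOutNbhd E x ∧ a ∉ secondInNbhd E x := by
  obtain ⟨a, haA, haX⟩ := exists_mem_outNbhd_mem_secondOutNbhd hE hn hδ hXY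
  obtain ⟨s, hsB, hsX⟩ := exists_mem_inNbhd_notMem_secondOutNbhd hE hn hδ hXY
  by_contra! hAXY
  refine hn.not_ge (three_mul_le_card_of_disjoint (le_card_outNbhd hδ a)
    (le_card_inNbhd hδ s) (le_card_outNbhd hδ x) ?_ ?_ ?_)
  · exact disjoint_left.2 fun u hau hus => hXY a haX u
      (mem_secondInNbhd.2 ⟨s, mem_inNbhd.1 hus, mem_inNbhd.1 hsB⟩) (mem_outNbhd.1 hau)
  · exact disjoint_left.2 fun u hau huA => hXY a haX u
      (hAXY u huA (mem_secondOutNbhd.2 ⟨a, mem_outNbhd.1 haA, mem_outNbhd.1 hau⟩))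
      (mem_outNbhd.1 hau)
  · exact disjoint_left.2 fun u hus huA =>
      hsX (mem_secondOutNbhd.2 ⟨u, mem_outNbhd.1 huA, mem_inNbhd.1 hus⟩)

lemma two_mul_add_one_le_card_outNbhd_add_two_mul_card_strictSecondOutNbhd
    (hE : IsOrientedGraph E) (hn : Fintype.card V < 3 * d) (hδ : d ≤ minSemidegree E)
    (hXY : ∀ b ∈ secondOutNbhd E x, ∀ c ∈ secondInNbhd E x, ¬ E b c) :
    2 * d + 1 ≤ #(outNbhd E x) + 2 * #(strictSecondOutNbhd E x) := by
  set T := {a ∈ outNbhd E x | a ∈ secondOutNbhd E x ∧ a ∉ secondInNbhd E x}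
  have hT : T.Nonempty := by
    obtain ⟨a, haA, haX, haY⟩ := exists_mem_outNbhd_mem_secondOutNbhd_notMem_secondInNbhd hE hn hδ hXY
    exact ⟨a, mem_filter.2 ⟨haA, haX, haY⟩⟩
  obtain ⟨a, haT, hsparse⟩ := hE.exists_two_mul_card_filter_add_one_le hT
  obtain ⟨haA, haX, haY⟩ := mem_filter.1 haT
  have hsub : outNbhd E a ⊆ {b ∈ T | E a b} ∪ strictSecondOutNbhd E x := by
    intro u hu
    rw [mem_outNbhd] at hu
    have huX : u ∈ secondOutNbhd E x := mem_secondOutNbhd.2 ⟨a, mem_outNbhd.1 haA, hu⟩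
    have huY : u ∉ secondInNbhd E x := fun huY => hXY a haX u huY hu
    have huB : u ∉ inNbhd E x := fun huB =>
      haY (mem_secondInNbhd.2 ⟨u, hu, mem_inNbhd.1 huB⟩)
    by_cases huA : u ∈ outNbhd E x
    · exact mem_union_left _ (mem_filter.2 ⟨mem_filter.2 ⟨huA, huX, huY⟩, hu⟩)
    · exact mem_union_right _ (mem_strictSecondOutNbhd.2 ⟨huX, huY, huA, huB⟩)
  have hout := (le_card_outNbhd hδ a).trans ((card_le_card hsub).trans (card_union_le _ _))
  have hTA : #T ≤ #(outNbhd E x) := card_filter_le _ _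
  omega

end NoEdge

lemma card_add_card_add_card_strictSecondOutNbhd_lt (hE : IsOrientedGraph E) (x : V) :
    #(outNbhd E x) + #(inNbhd E x) + #(strictSecondOutNbhd E x)
      + #(strictSecondOutNbhd (flip E) x) < Fintype.card V := by
  have h₁ : Disjoint (outNbhd E x ∪ inNbhd E x) (strictSecondOutNbhd E x) := by
    simp only [disjoint_left, mem_union, mem_strictSecondOutNbhd]
    tauto
  have h₂ : Disjoint (outNbhd E x ∪ inNbhd E x ∪ strictSecondOutNbhd E x)
      (strictSecondOutNbhd (flip E) x) := by
    simp only [disjoint_left, mem_union, mem_strictSecondOutNbhd]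
    tauto
  have hx : x ∉ outNbhd E x ∪ inNbhd E x ∪ strictSecondOutNbhd E x
      ∪ strictSecondOutNbhd (flip E) x := by
    have := hE.notMem_outNbhd_self x
    have := hE.flip.notMem_outNbhd_self x
    have := hE.notMem_secondOutNbhd_self x
    have := hE.flip.notMem_secondOutNbhd_self x
    simp only [mem_union, mem_strictSecondOutNbhd]
    tauto
  have := card_lt_univ_of_notMem hx
  rwa [card_union_of_disjoint h₂, card_union_of_disjoint h₁,
    card_union_of_disjoint (hE.disjoint_outNbhd_inNbhd x)] at this

lemma exists_edge_secondOutNbhd_secondInNbhd (hE : IsOrientedGraph E)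
    (hn : Fintype.card V < 3 * d) (hδ : d ≤ minSemidegree E) (x : V) :
    ∃ b ∈ secondOutNbhd E x, ∃ c ∈ secondInNbhd E x, E b c := by
  by_contra! hXY
  have hA := two_mul_add_one_le_card_outNbhd_add_two_mul_card_strictSecondOutNbhd hE hn hδ hXY
  have hB : 2 * d + 1 ≤ #(inNbhd E x) + 2 * #(strictSecondOutNbhd (flip E) x) :=
    two_mul_add_one_le_card_outNbhd_add_two_mul_card_strictSecondOutNbhd hE.flip hn
      (by rwa [minSemidegree_flip]) fun b hb c hc hbc => hXY c hc b hb hbc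
  have := card_add_card_add_card_strictSecondOutNbhd_lt hE x
  have := le_card_outNbhd hδ x
  have := le_card_inNbhd hδ x
  omega

end

theorem five_cycle_through_every_vertex_general (V : Type*) [Fintype V] (E : V → V → Prop)
    (hG : IsOrientedGraph E)
    (hδ : Fintype.card V / 3 + 1 ≤ minSemidegree E) :
    ∀ x : V, HasCycleThrough E 5 x := by
  intro x
  obtain ⟨b, hb, c, hc, hbc⟩ := exists_edge_secondOutNbhd_secondInNbhd hG (by omega) hδ x
  obtain ⟨a, hxa, hab⟩ := mem_secondOutNbhd.1 hb
  obtain ⟨s, hcs, hsx⟩ := mem_secondInNbhd.1 hc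
  exact hG.hasCycleThrough_five hxa hab hbc hcs hsx

theorem five_cycle_through_every_vertex (V : Type*) [Fintype V] (E : V → V → Prop)
    (hG : IsOrientedGraph E) (hn : 5 ≤ Fintype.card V)
    (hδ : Fintype.card V / 3 + 1 ≤ minSemidegree E) :
    ∀ x : V, HasCycleThrough E 5 x :=
  five_cycle_through_every_vertex_general V E hG hδ
end

section
/- If G is an oriented graph on n vertices with minimum semidegree δ⁰(G) ≥ ⌊n/3⌋ + 1, then for every vertex x of G there exists a vertex y such that G contains an xy-butterfly, i.e. there exist distinct vertices x, y, z, a, b of G such that xa, xz, az, zb, zy, by are all edges of G. -/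
theorem butterfly_exists (V : Type*) [Fintype V] (E : V → V → Prop)
    (hG : IsOrientedGraph E)
    (hδ : Fintype.card V / 3 + 1 ≤ minSemidegree E) :
    ∀ x : V, ∃ y z a b : V,
      [x, y, z, a, b].Pairwise (· ≠ ·) ∧
      E x a ∧ E x z ∧ E a z ∧ E z b ∧ E z y ∧ E b y := by
  classical
  set n := Fintype.card V with hn
  set k := n / 3 + 1 with hk
  have h3k : n + 1 ≤ 3 * k := by
    have := Nat.div_add_mod n 3
    have : n % 3 < 3 := Nat.mod_lt _ (by norm_num)
    omega
  have hdeg : ∀ u : V, k ≤ outDeg E u ∧ k ≤ inDeg E u := by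
    intro u
    have h1 : sInf (Set.range fun x => min (outDeg E x) (inDeg E x)) ≤
        min (outDeg E u) (inDeg E u) := Nat.sInf_le ⟨u, rfl⟩
    have h2 : k ≤ min (outDeg E u) (inDeg E u) := le_trans hδ h1
    exact ⟨le_trans h2 (min_le_left _ _), le_trans h2 (min_le_right _ _)⟩
  have houtcard : ∀ u : V, outDeg E u = (Finset.univ.filter (fun v => E u v)).card := by
    intro u
    rw [outDeg, Nat.card_eq_fintype_card, Fintype.card_subtype]
  have hincard : ∀ u : V, inDeg E u = (Finset.univ.filter (fun v => E v u)).card := by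
    intro u
    rw [inDeg, Nat.card_eq_fintype_card, Fintype.card_subtype]
  have noloop : ∀ u : V, ¬ E u u := fun u h => hG u u h h
  -- Key lemma: any set of size ≥ k contains an edge.
  have key : ∀ S : Finset V, k ≤ S.card → ∃ u ∈ S, ∃ v ∈ S, E u v := by
    intro S hS
    by_contra h
    push_neg at h
    obtain ⟨u, hu⟩ := Finset.card_pos.mp (by omega : 0 < S.card)
    set Op := Finset.univ.filter (fun v => E u v) with hOp
    set Ip := Finset.univ.filter (fun v => E v u) with hIp
    have hOS : Disjoint Op S := by
      rw [Finset.disjoint_left]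
      intro v hv hvS
      exact h u hu v hvS (by simpa [hOp] using hv)
    have hIS : Disjoint Ip S := by
      rw [Finset.disjoint_left]
      intro v hv hvS
      exact h v hvS u hu (by simpa [hIp] using hv)
    have hOI : Disjoint Op Ip := by
      rw [Finset.disjoint_left]
      intro v hv hv'
      exact hG u v (by simpa [hOp] using hv) (by simpa [hIp] using hv')
    have hcard : (Op ∪ Ip ∪ S).card = Op.card + Ip.card + S.card := by
      rw [Finset.card_union_of_disjoint (Finset.disjoint_union_left.mpr ⟨hOS, hIS⟩),
        Finset.card_union_of_disjoint hOI]
    have hle : (Op ∪ Ip ∪ S).card ≤ n := by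
      rw [hn]
      exact Finset.card_le_univ _
    have hOk : k ≤ Op.card := by rw [← houtcard]; exact (hdeg u).1
    have hIk : k ≤ Ip.card := by rw [← hincard]; exact (hdeg u).2
    omega
  -- Main argument
  intro x
  obtain ⟨a, ha, z, hz, haz⟩ := key (Finset.univ.filter (fun v => E x v))
    (by rw [← houtcard]; exact (hdeg x).1)
  have hxa : E x a := by simpa using ha
  have hxz : E x z := by simpa using hz
  obtain ⟨b, hb, y, hy, hby⟩ := key (Finset.univ.filter (fun v => E z v))
    (by rw [← houtcard]; exact (hdeg z).1)
  have hzb : E z b := by simpa using hb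
  have hzy : E z y := by simpa using hy
  refine ⟨y, z, a, b, ?_, hxa, hxz, haz, hzb, hzy, hby⟩
  have nxz : ¬ E z x := hG x z hxz
  have nza : ¬ E z a := hG a z haz
  have hax : a ≠ x := fun h => noloop x (h ▸ hxa)
  have hzx : z ≠ x := fun h => noloop x (h ▸ hxz)
  have hza : z ≠ a := fun h => noloop a (h ▸ haz)
  have hyx : y ≠ x := fun h => nxz (h ▸ hzy)
  have hyz : y ≠ z := fun h => noloop z (h ▸ hzy)
  have hya : y ≠ a := fun h => nza (h ▸ hzy)
  have hbx : b ≠ x := fun h => nxz (h ▸ hzb)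
  have hbz : b ≠ z := fun h => noloop z (h ▸ hzb)
  have hba : b ≠ a := fun h => nza (h ▸ hzb)
  have hyb : b ≠ y := fun h => noloop y (h ▸ hby)
  simp [List.pairwise_cons, hyx.symm, hzx.symm, hax.symm, hbx.symm, hyz, hya,
    hyb.symm, hza, hbz.symm, hba.symm]
end

section
/- Let C be a positive integer. If G is an oriented graph on n ≥ 8·10⁹·C vertices with minimum semidegree δ⁰(G) ≥ n/3 − C + 1, then for every pair of distinct vertices x, y of G there exists a directed path in G from x to y of length 3, 4 or 5. -/
/-- `G` contains a directed path of length `t` from `x` to `y`. -/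
def HasPath {V : Type*} (E : V → V → Prop) (t : ℕ) (x y : V) : Prop :=
  ∃ v : Fin (t + 1) → V, Function.Injective v ∧ v 0 = x ∧ v (Fin.last t) = y ∧
    ∀ i : Fin t, E (v i.castSucc) (v i.succ)

open Finset

lemma pair_count {V : Type*} [Fintype V] [DecidableEq V] (F : V → V → Prop) [DecidableRel F]
    (hF : ∀ u v, F u v → ¬ F v u) (S T : Finset V) (hTS : T ⊆ S) (hT : T.Nonempty)
    (D : ℕ) (hdeg : ∀ t ∈ T, D ≤ (S.filter (fun u => F u t)).card) :
    2 * D + T.card + 1 ≤ 2 * S.card := by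
  classical
  set P : Finset (V × V) := (S ×ˢ T).filter (fun p => F p.1 p.2) with hP
  have hmemP : ∀ p : V × V, p ∈ P ↔ (p.1 ∈ S ∧ p.2 ∈ T ∧ F p.1 p.2) := by
    intro p
    simp only [hP, Finset.mem_filter, Finset.mem_product]
    tauto
  have hsum : ∑ t ∈ T, (S.filter (fun u => F u t)).card = P.card := by
    rw [hP, Finset.card_filter, Finset.sum_product_right]
    refine Finset.sum_congr rfl fun t _ => ?_
    rw [Finset.card_filter]
  have hDsum : D * T.card ≤ P.card := by
    rw [← hsum]
    calc D * T.card = ∑ _t ∈ T, D := by rw [Finset.sum_const, smul_eq_mul, mul_comm]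
    _ ≤ _ := Finset.sum_le_sum hdeg
  set P1 : Finset (V × V) := P.filter (fun p => p.1 ∈ T) with hP1
  set P2 : Finset (V × V) := P.filter (fun p => p.1 ∉ T) with hP2
  have hmemP1 : ∀ p : V × V, p ∈ P1 ↔ (p.1 ∈ S ∧ p.2 ∈ T ∧ F p.1 p.2 ∧ p.1 ∈ T) := by
    intro p
    simp only [hP1, Finset.mem_filter, hmemP]
    tauto
  have hsplit : P1.card + P2.card = P.card := Finset.card_filter_add_card_filter_not _
  have hP2le : P2.card ≤ (S.card - T.card) * T.card := by
    have hsub : P2 ⊆ (S \ T) ×ˢ T := by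
      intro p hp
      simp only [hP2, Finset.mem_filter] at hp
      obtain ⟨hpP, hp1⟩ := hp
      rw [hmemP] at hpP
      simp only [Finset.mem_product, Finset.mem_sdiff]
      exact ⟨⟨hpP.1, hp1⟩, hpP.2.1⟩
    calc P2.card ≤ ((S \ T) ×ˢ T).card := Finset.card_le_card hsub
    _ = (S.card - T.card) * T.card := by rw [Finset.card_product, Finset.card_sdiff_of_subset hTS]
  have hP1le : P1.card + P1.card ≤ T.card * T.card - T.card := by
    have himg : (P1.image Prod.swap).card = P1.card := Finset.card_image_of_injective _ Prod.swap_injective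
    have hdisj : Disjoint P1 (P1.image Prod.swap) := by
      rw [Finset.disjoint_left]
      intro p hp hp'
      rw [hmemP1] at hp
      simp only [Finset.mem_image] at hp'
      obtain ⟨q, hq, hqp⟩ := hp'
      rw [hmemP1] at hq
      have h2 : F p.2 p.1 := by
        rw [← hqp]; simpa using hq.2.2.1
      exact hF _ _ hp.2.2.1 h2
    have hsub : P1 ∪ P1.image Prod.swap ⊆ T.offDiag := by
      intro p hp
      rw [Finset.mem_union] at hp
      rw [Finset.mem_offDiag]
      rcases hp with hp | hp
      · rw [hmemP1] at hp
        refine ⟨hp.2.2.2, hp.2.1, fun h => hF _ _ hp.2.2.1 (h ▸ hp.2.2.1)⟩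
      · simp only [Finset.mem_image] at hp
        obtain ⟨q, hq, hqp⟩ := hp
        rw [hmemP1] at hq
        subst hqp
        refine ⟨hq.2.1, hq.2.2.2, ?_⟩
        intro h
        simp only [Prod.fst_swap, Prod.snd_swap] at h
        exact hF _ _ hq.2.2.1 (h ▸ hq.2.2.1)
    calc P1.card + P1.card = (P1 ∪ P1.image Prod.swap).card := by
          rw [Finset.card_union_of_disjoint hdisj, himg]
    _ ≤ T.offDiag.card := Finset.card_le_card hsub
    _ = T.card * T.card - T.card := Finset.offDiag_card T
  have ht1 : 1 ≤ T.card := Finset.card_pos.mpr hT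
  have hST : T.card ≤ S.card := Finset.card_le_card hTS
  have hTT : T.card ≤ T.card * T.card := Nat.le_mul_of_pos_left _ (by omega)
  have key : (2 * D + T.card + 1) * T.card ≤ (2 * S.card) * T.card := by
    zify [ht1, hST, hTT] at *
    nlinarith [hDsum, hsplit, hP2le, hP1le]
  exact Nat.le_of_mul_le_mul_right key (by omega)


lemma hasPath3 {V : Type*} {E : V → V → Prop} {x a b y : V}
    (nxa : x ≠ a) (nxb : x ≠ b) (nxy : x ≠ y) (nab : a ≠ b) (nay : a ≠ y) (nby : b ≠ y)
    (e1 : E x a) (e2 : E a b) (e3 : E b y) : HasPath E 3 x y := by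
  refine ⟨![x, a, b, y], ?_, rfl, rfl, ?_⟩
  · intro i j hij
    fin_cases i <;> fin_cases j <;> simp_all
  · intro i
    fin_cases i <;> simpa using ‹_›

lemma hasPath4 {V : Type*} {E : V → V → Prop} {x a b c y : V}
    (nxa : x ≠ a) (nxb : x ≠ b) (nxc : x ≠ c) (nxy : x ≠ y)
    (nab : a ≠ b) (nac : a ≠ c) (nay : a ≠ y)
    (nbc : b ≠ c) (nby : b ≠ y) (ncy : c ≠ y)
    (e1 : E x a) (e2 : E a b) (e3 : E b c) (e4 : E c y) : HasPath E 4 x y := by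
  refine ⟨![x, a, b, c, y], ?_, rfl, rfl, ?_⟩
  · intro i j hij
    fin_cases i <;> fin_cases j <;> simp_all
  · intro i
    fin_cases i <;> simpa using ‹_›

set_option maxRecDepth 4000 in
lemma hasPath5 {V : Type*} {E : V → V → Prop} {x a b c d y : V}
    (nxa : x ≠ a) (nxb : x ≠ b) (nxc : x ≠ c) (nxd : x ≠ d) (nxy : x ≠ y)
    (nab : a ≠ b) (nac : a ≠ c) (nad : a ≠ d) (nay : a ≠ y)
    (nbc : b ≠ c) (nbd : b ≠ d) (nby : b ≠ y)
    (ncd : c ≠ d) (ncy : c ≠ y) (ndy : d ≠ y)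
    (e1 : E x a) (e2 : E a b) (e3 : E b c) (e4 : E c d) (e5 : E d y) : HasPath E 5 x y := by
  refine ⟨fun i => if i.val = 0 then x else if i.val = 1 then a else if i.val = 2 then b
    else if i.val = 3 then c else if i.val = 4 then d else y, ?_, by norm_num, by norm_num, ?_⟩
  · intro i j hij
    fin_cases i <;> fin_cases j <;> simp_all
  · intro i
    fin_cases i <;> · simp only [Fin.castSucc, Fin.castAdd, Fin.castLE, Fin.succ]; norm_num; try assumption

theorem path_of_length_3_4_or_5 (C : ℕ) (hC : 0 < C)
    (V : Type*) [Fintype V] (E : V → V → Prop) (hG : IsOrientedGraph E)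
    (hn : 8 * 10 ^ 9 * C ≤ Fintype.card V)
    (hδ : (Fintype.card V : ℝ) / 3 - C + 1 ≤ (minSemidegree E : ℝ)) :
    ∀ x y : V, x ≠ y → HasPath E 3 x y ∨ HasPath E 4 x y ∨ HasPath E 5 x y := by
  classical
  intro x y hxy
  by_contra hcon
  push_neg at hcon
  obtain ⟨h3, h4, h5⟩ := hcon
  set n := Fintype.card V with hn_def
  set d := minSemidegree E with hd_def
  -- basic degree facts
  have hdmin : ∀ v : V, d ≤ min (outDeg E v) (inDeg E v) := by
    intro v
    exact Nat.sInf_le ⟨v, rfl⟩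
  have houtDeg : ∀ v : V, d ≤ (univ.filter (fun w => E v w)).card := by
    intro v
    have h1 := (hdmin v).trans (min_le_left _ _)
    have h2 : outDeg E v = (univ.filter (fun w => E v w)).card := by
      rw [outDeg, Nat.card_eq_fintype_card, Fintype.card_subtype]
    omega
  have hinDeg : ∀ v : V, d ≤ (univ.filter (fun w => E w v)).card := by
    intro v
    have h1 := (hdmin v).trans (min_le_right _ _)
    have h2 : inDeg E v = (univ.filter (fun w => E w v)).card := by
      rw [inDeg, Nat.card_eq_fintype_card, Fintype.card_subtype]
    omega
  have noloop : ∀ v, ¬ E v v := fun v h => hG v v h h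
  have neOfEdge : ∀ {u v : V}, E u v → u ≠ v := by
    intro u v h heq
    exact noloop v (heq ▸ h)
  -- restricted (to G - {x,y}) in/out neighbourhood cardinality bounds
  have hin2 : ∀ v : V, d ≤ (univ.filter (fun u => E u v ∧ u ≠ x ∧ u ≠ y)).card + 2 := by
    intro v
    have hsub : univ.filter (fun w => E w v) ⊆
        (univ.filter (fun u => E u v ∧ u ≠ x ∧ u ≠ y)) ∪ {x, y} := by
      intro u hu
      simp only [mem_filter, mem_univ, true_and] at hu
      by_cases hux : u = x
      · simp [hux, Finset.mem_union]
      by_cases huy : u = y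
      · simp [huy, Finset.mem_union]
      · simp only [Finset.mem_union, mem_filter, mem_univ, true_and]
        exact Or.inl ⟨hu, hux, huy⟩
    have h1 := (hinDeg v).trans (Finset.card_le_card hsub)
    have h2 := Finset.card_union_le (univ.filter (fun u => E u v ∧ u ≠ x ∧ u ≠ y)) ({x, y} : Finset V)
    have h3 : ({x, y} : Finset V).card ≤ 2 := Finset.card_insert_le x {y} |>.trans (by simp)
    omega
  have hout2 : ∀ v : V, d ≤ (univ.filter (fun u => E v u ∧ u ≠ x ∧ u ≠ y)).card + 2 := by
    intro v
    have hsub : univ.filter (fun w => E v w) ⊆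
        (univ.filter (fun u => E v u ∧ u ≠ x ∧ u ≠ y)) ∪ {x, y} := by
      intro u hu
      simp only [mem_filter, mem_univ, true_and] at hu
      by_cases hux : u = x
      · simp [hux, Finset.mem_union]
      by_cases huy : u = y
      · simp [huy, Finset.mem_union]
      · simp only [Finset.mem_union, mem_filter, mem_univ, true_and]
        exact Or.inl ⟨hu, hux, huy⟩
    have h1 := (houtDeg v).trans (Finset.card_le_card hsub)
    have h2 := Finset.card_union_le (univ.filter (fun u => E v u ∧ u ≠ x ∧ u ≠ y)) ({x, y} : Finset V)
    have h3 : ({x, y} : Finset V).card ≤ 2 := Finset.card_insert_le x {y} |>.trans (by simp)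
    omega
  -- the main sets
  set A : Finset V := univ.filter (fun v => E x v ∧ v ≠ y) with hA_def
  set B : Finset V := univ.filter (fun v => E v y ∧ v ≠ x) with hB_def
  have memA : ∀ v, v ∈ A ↔ E x v ∧ v ≠ y := by
    intro v; rw [hA_def]; simp
  have memB : ∀ v, v ∈ B ↔ E v y ∧ v ≠ x := by
    intro v; rw [hB_def]; simp
  have hAx : ∀ v ∈ A, v ≠ x := by
    intro v hv heq
    exact noloop x (heq ▸ (memA v |>.1 hv).1)
  have hBy : ∀ v ∈ B, v ≠ y := by
    intro v hv heq
    exact noloop y (heq ▸ (memB v |>.1 hv).1)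
  set NA : Finset V := univ.filter (fun v => v ≠ x ∧ v ≠ y ∧ ∃ a ∈ A, E a v) with hNA_def
  set N2A : Finset V := univ.filter (fun v => v ≠ x ∧ v ≠ y ∧ ∃ c ∈ NA, E c v) with hN2A_def
  have memNA : ∀ v, v ∈ NA ↔ v ≠ x ∧ v ≠ y ∧ ∃ a ∈ A, E a v := by
    intro v; rw [hNA_def]; simp
  have memN2A : ∀ v, v ∈ N2A ↔ v ≠ x ∧ v ≠ y ∧ ∃ c ∈ NA, E c v := by
    intro v; rw [hN2A_def]; simp
  set Hs : Finset V := univ.filter (fun v => v ≠ x ∧ v ≠ y) with hHs_def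
  have memHs : ∀ v, v ∈ Hs ↔ v ≠ x ∧ v ≠ y := by
    intro v; rw [hHs_def]; simp
  set RA : Finset V := A ∪ NA with hRA_def
  set D2 : Finset V := A ∪ NA ∪ N2A with hD2_def
  set X : Finset V := Hs \ D2 with hX_def
  set Rb : Finset V := Hs \ RA with hRb_def
  -- no edges from A to B
  have notAB : ∀ a ∈ A, ∀ b ∈ B, ¬ E a b := by
    intro a ha b hb hab
    obtain ⟨hxa, hay⟩ := memA a |>.1 ha
    obtain ⟨hby, hbx⟩ := memB b |>.1 hb
    exact h3 (hasPath3 (neOfEdge hxa) (Ne.symm hbx) hxy (neOfEdge hab) hay (neOfEdge hby)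
      hxa hab hby)
  -- vertices of B \ A lie outside D2
  have headX : ∀ v ∈ B, v ∉ A → v ∈ X := by
    intro v hvB hvA
    obtain ⟨hvy, hvx⟩ := memB v |>.1 hvB
    rw [hX_def, Finset.mem_sdiff]
    refine ⟨(memHs v).2 ⟨hvx, hBy v hvB⟩, ?_⟩
    intro hvD2
    rw [hD2_def] at hvD2
    rcases Finset.mem_union.1 hvD2 with hv | hv
    · rcases Finset.mem_union.1 hv with hv | hv
      · exact hvA hv
      · obtain ⟨_, _, a, haA, hav⟩ := memNA v |>.1 hv
        exact notAB a haA v hvB hav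
    · obtain ⟨_, _, c, hcNA, hcv⟩ := memN2A v |>.1 hv
      obtain ⟨hcx, hcy, a, haA, hac⟩ := memNA c |>.1 hcNA
      obtain ⟨hxa, hay⟩ := memA a |>.1 haA
      -- path x a c v y of length 4
      refine h4 (hasPath4 (neOfEdge hxa) (Ne.symm hcx) (Ne.symm hvx) hxy
        (neOfEdge hac) ?_ hay (neOfEdge hcv) hcy (hBy v hvB) hxa hac hcv hvy)
      · intro h; exact hvA (h ▸ haA)
  -- in-neighbours of vertices of B \ A lie in X
  have tailX : ∀ v ∈ B, v ∉ A → ∀ u, E u v → u ≠ x → u ≠ y → u ∈ X := by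
    intro v hvB hvA u huv hux huy
    obtain ⟨hvy, hvx⟩ := memB v |>.1 hvB
    rw [hX_def, Finset.mem_sdiff]
    refine ⟨(memHs u).2 ⟨hux, huy⟩, ?_⟩
    intro huD2
    rw [hD2_def] at huD2
    rcases Finset.mem_union.1 huD2 with hu | hu
    · rcases Finset.mem_union.1 hu with hu | hu
      · exact notAB u hu v hvB huv
      · obtain ⟨_, _, a, haA, hau⟩ := memNA u |>.1 hu
        obtain ⟨hxa, hay⟩ := memA a |>.1 haA
        refine h4 (hasPath4 (neOfEdge hxa) (Ne.symm hux) (Ne.symm hvx) hxy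
          (neOfEdge hau) ?_ hay (neOfEdge huv) huy (hBy v hvB) hxa hau huv hvy)
        · intro h; exact hvA (h ▸ haA)
    · obtain ⟨_, _, c, hcNA, hcu⟩ := memN2A u |>.1 hu
      obtain ⟨hcx, hcy, a, haA, hac⟩ := memNA c |>.1 hcNA
      obtain ⟨hxa, hay⟩ := memA a |>.1 haA
      -- path x a c u v y of length 5
      refine h5 (hasPath5 (neOfEdge hxa) (Ne.symm hcx) (Ne.symm hux) (Ne.symm hvx) hxy
        (neOfEdge hac) ?_ ?_ hay (neOfEdge hcu) ?_ hcy (neOfEdge huv) huy (hBy v hvB)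
        hxa hac hcu huv hvy)
      · -- a ≠ u
        intro h
        exact hG a c hac (by rw [h]; exact hcu)
      · -- a ≠ v
        intro h; exact hvA (h ▸ haA)
      · -- c ≠ v
        intro h
        exact notAB a haA v hvB (h ▸ hac)
  -- in-neighbours of X-vertices lie outside RA
  have tailRb : ∀ t ∈ X, ∀ u, E u t → u ≠ x → u ≠ y → u ∈ Rb := by
    intro t ht u hut hux huy
    rw [hX_def, Finset.mem_sdiff] at ht
    obtain ⟨htHs, htD2⟩ := ht
    obtain ⟨htx, hty⟩ := (memHs t).1 htHs
    rw [hRb_def, Finset.mem_sdiff]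
    refine ⟨(memHs u).2 ⟨hux, huy⟩, ?_⟩
    intro huRA
    rw [hRA_def] at huRA
    rcases Finset.mem_union.1 huRA with hu | hu
    · refine htD2 ?_
      rw [hD2_def]
      refine Finset.mem_union.2 (Or.inl (Finset.mem_union.2 (Or.inr ?_)))
      exact (memNA t).2 ⟨htx, hty, u, hu, hut⟩
    · refine htD2 ?_
      rw [hD2_def]
      refine Finset.mem_union.2 (Or.inr ?_)
      exact (memN2A t).2 ⟨htx, hty, u, hu, hut⟩
  have hXsubRb : X ⊆ Rb := by
    intro t ht
    rw [hX_def, Finset.mem_sdiff] at ht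
    rw [hRb_def, Finset.mem_sdiff]
    refine ⟨ht.1, fun hRA' => ht.2 ?_⟩
    rw [hD2_def]; rw [hRA_def] at hRA'
    exact Finset.mem_union.2 (Or.inl hRA')
  -- out-neighbours of A-vertices lie in RA
  have houtA : ∀ a ∈ A, ∀ w, E a w → w ≠ x → w ≠ y → w ∈ RA := by
    intro a ha w haw hwx hwy
    rw [hRA_def]
    exact Finset.mem_union.2 (Or.inr ((memNA w).2 ⟨hwx, hwy, a, ha, haw⟩))
  have hAsubRA : A ⊆ RA := by
    rw [hRA_def]; exact Finset.subset_union_left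
  -- size facts
  have hAcard : d ≤ A.card + 1 := by
    have hsub : univ.filter (fun w => E x w) ⊆ A ∪ {y} := by
      intro w hw
      simp only [mem_filter, mem_univ, true_and] at hw
      by_cases hwy : w = y
      · simp [hwy]
      · exact Finset.mem_union.2 (Or.inl ((memA w).2 ⟨hw, hwy⟩))
    have h1 := (houtDeg x).trans (Finset.card_le_card hsub)
    have h2 := Finset.card_union_le A ({y} : Finset V)
    simp only [Finset.card_singleton] at h2
    omega
  have hBcard : d ≤ B.card + 1 := by
    have hsub : univ.filter (fun w => E w y) ⊆ B ∪ {x} := by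
      intro w hw
      simp only [mem_filter, mem_univ, true_and] at hw
      by_cases hwx : w = x
      · simp [hwx]
      · exact Finset.mem_union.2 (Or.inl ((memB w).2 ⟨hw, hwx⟩))
    have h1 := (hinDeg y).trans (Finset.card_le_card hsub)
    have h2 := Finset.card_union_le B ({x} : Finset V)
    simp only [Finset.card_singleton] at h2
    omega
  have hHscard : Hs.card + 2 = n := by
    have : Hs = univ \ {x, y} := by
      ext v
      rw [memHs]
      simp [Finset.mem_sdiff]
    rw [this, Finset.card_sdiff_of_subset (Finset.subset_univ _), Finset.card_univ]
    have hxy2 : ({x, y} : Finset V).card = 2 := by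
      rw [Finset.card_insert_of_notMem (by simpa using hxy), Finset.card_singleton]
    rw [hxy2]
    have hn2 : 2 ≤ n := by
      have h1 : 8 * 10 ^ 9 * 1 ≤ 8 * 10 ^ 9 * C := Nat.mul_le_mul_left _ hC
      omega
    omega
  have hRAHs : RA ⊆ Hs := by
    rw [hRA_def]
    intro v hv
    rcases Finset.mem_union.1 hv with hv | hv
    · exact (memHs v).2 ⟨hAx v hv, ((memA v).1 hv).2⟩
    · obtain ⟨h1, h2, _⟩ := (memNA v).1 hv
      exact (memHs v).2 ⟨h1, h2⟩
  have hRARb : RA.card + Rb.card = Hs.card := by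
    rw [hRb_def]
    have := Finset.card_sdiff_add_card_eq_card hRAHs
    omega
  -- 5 ≤ d
  have hC1R : (1 : ℝ) ≤ (C : ℝ) := by exact_mod_cast hC
  have hnR : (8 * 10 ^ 9 : ℝ) * (C : ℝ) ≤ (n : ℝ) := by exact_mod_cast hn
  have hd5 : 5 ≤ d := by
    have : (5 : ℝ) ≤ (d : ℝ) := by linarith only [hδ, hnR, hC1R]
    exact_mod_cast this
  -- private out-neighbourhoods
  set PrS : V → Finset V := fun k =>
    univ.filter (fun u => E k u ∧ u ≠ x ∧ u ≠ y ∧ ∀ a ∈ A, a ≠ k → ¬ E a u) with hPrS_def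
  have memPrS : ∀ k u, u ∈ PrS k ↔ (E k u ∧ u ≠ x ∧ u ≠ y ∧ ∀ a ∈ A, a ≠ k → ¬ E a u) := by
    intro k u; rw [hPrS_def]; simp
  have hPr_disj : ∀ k ∈ B ∩ A, ∀ k' ∈ B ∩ A, k ≠ k' → Disjoint (PrS k) (PrS k') := by
    intro k hk k' hk' hkk'
    rw [Finset.disjoint_left]
    intro u hu hu'
    have h1 := (memPrS k u).1 hu
    have h2 := (memPrS k' u).1 hu'
    exact h2.2.2.2 k (Finset.mem_inter.1 hk).2 hkk' h1.1
  have hKup : (B ∩ A).Nonempty →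
      4 * (B ∩ A).card ≤ n ∨ 2 * (B ∩ A).card + 5 * d ≤ 2 * n + 11 := by
    intro hKne
    by_cases hex : ∃ k₀ ∈ B ∩ A, (PrS k₀).card ≤ 3
    · -- use the special vertex k₀
      right
      obtain ⟨k₀, hk₀, hPr3⟩ := hex
      have hk₀B : k₀ ∈ B := (Finset.mem_inter.1 hk₀).1
      have hk₀A : k₀ ∈ A := (Finset.mem_inter.1 hk₀).2
      obtain ⟨hxk₀, hk₀y⟩ := (memA k₀).1 hk₀A
      obtain ⟨hk₀yE, hk₀x⟩ := (memB k₀).1 hk₀B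
      set Bs : Finset V := univ.filter (fun q => E q k₀ ∧ q ≠ x ∧ q ≠ y) with hBs_def
      have memBs : ∀ q, q ∈ Bs ↔ E q k₀ ∧ q ≠ x ∧ q ≠ y := by
        intro q; rw [hBs_def]; simp
      have iBs : d ≤ Bs.card + 2 := hin2 k₀
      have hBsA : ∀ q ∈ Bs, q ∉ A := by
        intro q hq hqA
        exact notAB q hqA k₀ hk₀B ((memBs q).1 hq).1
      have hBsRb : Bs ⊆ Rb := by
        intro q hq
        obtain ⟨hqk₀, hqx, hqy⟩ := (memBs q).1 hq
        rw [hRb_def, Finset.mem_sdiff]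
        refine ⟨(memHs q).2 ⟨hqx, hqy⟩, ?_⟩
        intro hqRA
        rw [hRA_def] at hqRA
        rcases Finset.mem_union.1 hqRA with hq' | hq'
        · exact hBsA q hq hq'
        · obtain ⟨_, _, a, haA, haq⟩ := (memNA q).1 hq'
          obtain ⟨hxa, hay⟩ := (memA a).1 haA
          exact h4 (hasPath4 (neOfEdge hxa) (Ne.symm hqx) (neOfEdge hxk₀) hxy
            (neOfEdge haq) (fun h => hG q k₀ hqk₀ (h ▸ haq)) hay
            (neOfEdge hqk₀) hqy hk₀y hxa haq hqk₀ hk₀yE)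
      have hBstails : ∀ q ∈ Bs, ∀ u, E u q → u ≠ x → u ≠ y → u ∈ Rb ∨ u ∈ PrS k₀ := by
        intro q hq u huq hux huy
        obtain ⟨hqk₀, hqx, hqy⟩ := (memBs q).1 hq
        by_cases huRA : u ∈ RA
        · rw [hRA_def] at huRA
          rcases Finset.mem_union.1 huRA with hu' | hu'
          · exfalso
            obtain ⟨hxu, huy'⟩ := (memA u).1 hu'
            exact h4 (hasPath4 (neOfEdge hxu) (Ne.symm hqx) (neOfEdge hxk₀) hxy
              (neOfEdge huq) (fun h => hG q k₀ hqk₀ (h ▸ huq)) huy'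
              (neOfEdge hqk₀) hqy hk₀y hxu huq hqk₀ hk₀yE)
          · -- u ∈ NA
            right
            obtain ⟨_, _, a₀, ha₀A, ha₀u⟩ := (memNA u).1 hu'
            have hkill : ∀ a ∈ A, a ≠ k₀ → ¬ E a u := by
              intro a haA hak₀ hau
              obtain ⟨hxa, hay⟩ := (memA a).1 haA
              exact h5 (hasPath5 (neOfEdge hxa) (Ne.symm hux) (Ne.symm hqx)
                (neOfEdge hxk₀) hxy
                (neOfEdge hau) (fun h => hBsA q hq (h ▸ haA)) hak₀ hay
                (neOfEdge huq) (fun h => hG q k₀ hqk₀ (h ▸ huq)) huy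
                (neOfEdge hqk₀) hqy hk₀y
                hxa hau huq hqk₀ hk₀yE)
            have hk₀u : E k₀ u := by
              by_cases h : a₀ = k₀
              · exact h ▸ ha₀u
              · exact absurd ha₀u (hkill a₀ ha₀A h)
            exact (memPrS k₀ u).2 ⟨hk₀u, hux, huy, hkill⟩
        · left
          rw [hRb_def, Finset.mem_sdiff]
          exact ⟨(memHs u).2 ⟨hux, huy⟩, huRA⟩
      have hBsne : Bs.Nonempty := by
        rw [← Finset.card_pos]
        omega
      have i8 : 2 * (d - 5) + Bs.card + 1 ≤ 2 * Rb.card := by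
        refine pair_count E hG Rb Bs hBsRb hBsne (d - 5) ?_
        intro q hq
        have hsub : (univ.filter (fun u => E u q ∧ u ≠ x ∧ u ≠ y)) ⊆
            Rb.filter (fun u => E u q) ∪ PrS k₀ := by
          intro u hu
          simp only [mem_filter, mem_univ, true_and] at hu
          obtain ⟨huq, hux, huy⟩ := hu
          rcases hBstails q hq u huq hux huy with h | h
          · exact Finset.mem_union.2 (Or.inl (Finset.mem_filter.2 ⟨h, huq⟩))
          · exact Finset.mem_union.2 (Or.inr h)
        have h1 := (hin2 q).trans (Nat.add_le_add_right (Finset.card_le_card hsub) 2)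
        have h2 := Finset.card_union_le (Rb.filter (fun u => E u q)) (PrS k₀)
        omega
      have i8' : 2 * d + Bs.card + 1 ≤ 2 * Rb.card + 10 := by omega
      -- |RA| ≥ |K| + d - 2
      set NOk : Finset V := univ.filter (fun w => E k₀ w ∧ w ≠ x ∧ w ≠ y) with hNOk_def
      have iNOk : d ≤ NOk.card + 2 := hout2 k₀
      have hdisjK : Disjoint (B ∩ A) NOk := by
        rw [Finset.disjoint_left]
        intro w hw hw'
        rw [hNOk_def] at hw'
        simp only [mem_filter, mem_univ, true_and] at hw'
        exact notAB k₀ hk₀A w (Finset.mem_inter.1 hw).1 hw'.1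
      have hsubRA : (B ∩ A) ∪ NOk ⊆ RA := by
        intro w hw
        rcases Finset.mem_union.1 hw with hw | hw
        · exact hAsubRA (Finset.mem_inter.1 hw).2
        · rw [hNOk_def] at hw
          simp only [mem_filter, mem_univ, true_and] at hw
          rw [hRA_def]
          exact Finset.mem_union.2 (Or.inr ((memNA w).2 ⟨hw.2.1, hw.2.2, k₀, hk₀A, hw.1⟩))
      have i9 : (B ∩ A).card + NOk.card ≤ RA.card := by
        rw [← Finset.card_union_of_disjoint hdisjK]
        exact Finset.card_le_card hsubRA
      omega
    · -- pigeonhole: all private sets have ≥ 4 elements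
      left
      push_neg at hex
      have hsum : ∑ k ∈ B ∩ A, (PrS k).card ≤ n := by
        rw [← Finset.card_biUnion hPr_disj]
        exact (Finset.card_le_card (Finset.subset_univ _)).trans (le_of_eq Finset.card_univ)
      have h4K : 4 * (B ∩ A).card ≤ ∑ k ∈ B ∩ A, (PrS k).card := by
        calc 4 * (B ∩ A).card = ∑ _k ∈ B ∩ A, 4 := by rw [Finset.sum_const, smul_eq_mul, mul_comm]
        _ ≤ _ := Finset.sum_le_sum (fun k hk => hex k hk)
      omega
  -- real-number versions of global facts
  have hδR : (n : ℝ) / 3 - (C : ℝ) + 1 ≤ (d : ℝ) := hδ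
  have i6 : (B ∩ A).card + (B \ A).card = B.card := Finset.card_inter_add_card_sdiff B A
  have hRn : RA.card + Rb.card + 2 = n := by omega
  by_cases hβ : (B \ A).Nonempty
  · -- main branch : B \ A nonempty
    have hBAsubX : B \ A ⊆ X := by
      intro v hv
      rw [Finset.mem_sdiff] at hv
      exact headX v hv.1 hv.2
    have i1 : 2 * (d - 2) + (B \ A).card + 1 ≤ 2 * X.card := by
      refine pair_count E hG X (B \ A) hBAsubX hβ (d - 2) ?_
      intro v hv
      rw [Finset.mem_sdiff] at hv
      have hsub : (univ.filter (fun u => E u v ∧ u ≠ x ∧ u ≠ y)) ⊆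
          X.filter (fun u => E u v) := by
        intro u hu
        simp only [mem_filter, mem_univ, true_and] at hu
        exact Finset.mem_filter.2 ⟨tailX v hv.1 hv.2 u hu.1 hu.2.1 hu.2.2, hu.1⟩
      have h1 := (hin2 v).trans (Nat.add_le_add_right (Finset.card_le_card hsub) 2)
      omega
    have hXne : X.Nonempty := by
      rw [← Finset.card_pos]
      omega
    have i2 : 2 * (d - 2) + X.card + 1 ≤ 2 * Rb.card := by
      refine pair_count E hG Rb X hXsubRb hXne (d - 2) ?_
      intro t ht
      have hsub : (univ.filter (fun u => E u t ∧ u ≠ x ∧ u ≠ y)) ⊆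
          Rb.filter (fun u => E u t) := by
        intro u hu
        simp only [mem_filter, mem_univ, true_and] at hu
        exact Finset.mem_filter.2 ⟨tailRb t ht u hu.1 hu.2.1 hu.2.2, hu.1⟩
      have h1 := (hin2 t).trans (Nat.add_le_add_right (Finset.card_le_card hsub) 2)
      omega
    have hAne : A.Nonempty := by
      rw [← Finset.card_pos]
      omega
    have i3 : 2 * (d - 2) + A.card + 1 ≤ 2 * RA.card := by
      refine pair_count (fun u v => E v u) (fun u v h h' => hG v u h h') RA A hAsubRA hAne
        (d - 2) ?_
      intro a ha
      show d - 2 ≤ (RA.filter (fun u => E a u)).card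
      have hsub : (univ.filter (fun w => E a w ∧ w ≠ x ∧ w ≠ y)) ⊆
          RA.filter (fun u => E a u) := by
        intro w hw
        simp only [mem_filter, mem_univ, true_and] at hw
        exact Finset.mem_filter.2 ⟨houtA a ha w hw.1 hw.2.1 hw.2.2, hw.1⟩
      have h1 := (hout2 a).trans (Nat.add_le_add_right (Finset.card_le_card hsub) 2)
      omega
    have i1' : 2 * d + (B \ A).card + 1 ≤ 2 * X.card + 4 := by omega
    have i2' : 2 * d + X.card + 1 ≤ 2 * Rb.card + 4 := by omega
    have i3' : 2 * d + A.card + 1 ≤ 2 * RA.card + 4 := by omega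
    -- real versions
    have R1 : 2 * (d : ℝ) + ((B \ A).card : ℝ) + 1 ≤ 2 * (X.card : ℝ) + 4 := by exact_mod_cast i1'
    have R2 : 2 * (d : ℝ) + (X.card : ℝ) + 1 ≤ 2 * (Rb.card : ℝ) + 4 := by exact_mod_cast i2'
    have R3 : 2 * (d : ℝ) + (A.card : ℝ) + 1 ≤ 2 * (RA.card : ℝ) + 4 := by exact_mod_cast i3'
    have R4 : (RA.card : ℝ) + (Rb.card : ℝ) + 2 = (n : ℝ) := by exact_mod_cast hRn
    have R5 : (d : ℝ) ≤ (A.card : ℝ) + 1 := by exact_mod_cast hAcard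
    have R6 : (d : ℝ) ≤ (B.card : ℝ) + 1 := by exact_mod_cast hBcard
    have R7 : ((B ∩ A).card : ℝ) + ((B \ A).card : ℝ) = (B.card : ℝ) := by exact_mod_cast i6
    have hKlow : 13 * (d : ℝ) - 4 * (n : ℝ) - 10 ≤ ((B ∩ A).card : ℝ) := by linarith
    have hKne : (B ∩ A).Nonempty := by
      rw [← Finset.card_pos]
      by_contra hk
      push_neg at hk
      have h0 : ((B ∩ A).card : ℝ) = 0 := by
        have : (B ∩ A).card = 0 := by omega
        exact_mod_cast this
      linarith only [hKlow, h0, hδR, hnR, hC1R]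
    rcases hKup hKne with hcase | hcase
    · have Rc : 4 * (((B ∩ A).card : ℝ)) ≤ (n : ℝ) := by exact_mod_cast hcase
      linarith only [Rc, hKlow, hδR, hnR, hC1R]
    · have Rc : 2 * (((B ∩ A).card : ℝ)) + 5 * (d : ℝ) ≤ 2 * (n : ℝ) + 11 := by exact_mod_cast hcase
      linarith only [Rc, hKlow, hδR, hnR, hC1R]
  · -- degenerate branch : B ⊆ A
    have hBA0 : (B \ A).card = 0 := by
      rw [Finset.card_eq_zero, ← Finset.not_nonempty_iff_eq_empty]
      exact hβ
    have hKB : (B ∩ A).card = B.card := by omega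
    have hKne : (B ∩ A).Nonempty := by
      rw [← Finset.card_pos]
      omega
    rcases hKup hKne with hcase | hcase
    · have Rc : 4 * (((B ∩ A).card : ℝ)) ≤ (n : ℝ) := by exact_mod_cast hcase
      have R6 : (d : ℝ) ≤ (B.card : ℝ) + 1 := by exact_mod_cast hBcard
      have RK : ((B ∩ A).card : ℝ) = (B.card : ℝ) := by exact_mod_cast hKB
      linarith only [Rc, R6, RK, hδR, hnR, hC1R]
    · have Rc : 2 * (((B ∩ A).card : ℝ)) + 5 * (d : ℝ) ≤ 2 * (n : ℝ) + 11 := by exact_mod_cast hcase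
      have R6 : (d : ℝ) ≤ (B.card : ℝ) + 1 := by exact_mod_cast hBcard
      have RK : ((B ∩ A).card : ℝ) = (B.card : ℝ) := by exact_mod_cast hKB
      linarith only [Rc, R6, RK, hδR, hnR, hC1R]
end

section
/- Let G be an oriented graph on n vertices. (i) If δ⁰(G) ≥ n/4, then either G contains a 3-cycle, or for every ordered pair of distinct vertices x, y of G there is a directed path from x to y of length at most 6 (i.e. the diameter of G is at most 6). (ii) If δ⁰(G) > n/5, then either G contains a 3-cycle, or for every ordered pair of distinct vertices x, y of G there is a directed path from x to y of length at most 50 (i.e. the diameter of G is at most 50). -/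
/-
  Auxiliary development.

  Mathematical outline: assume the graph is triangle-free (otherwise we are done).
  * `CHL` (a Caccetta–Häggkvist type bound): a triangle-free oriented graph in which
    every vertex has outdegree at least `k ≥ 1` has at least `φ²·k + 1` vertices,
    where `φ² = (3+√5)/2`.  Proof: take a vertex `z` of maximal indegree (≥ k by
    double counting), let `A = N⁺(z)`, `B = N⁻(z)`, `R` the rest.  Triangle-freeness
    forbids edges from `A` to `B`, so inside `A` every vertex has outdegree
    ≥ `k - |R|`; recurse on `A`.
  * `BSL`: for out-balls `S_t` around a vertex, `CHL` applied to `S_t` (whose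
    vertices have all out-neighbours inside `S_{t+1}`) yields the growth recurrence
    `(1+√5)|S_t| + (3+√5)d + 2 ≤ (3+√5)|S_{t+1}|`, `d` the minimum (out/in) degree.
  * Iterating: `|S_3| ≥ 2d + 1` and `|S_7| ≥ 2.52…·d + 1`; the same holds for
    in-balls (apply everything to the reversed graph).
  * If there is no path of length ≤ 6 (resp. ≤ 50) from `x` to `y`, the out-ball
    `S_3(x)` (resp. `S_7(x)`) and the in-ball `T_3(y)` (resp. `T_7(y)`) are disjoint,
    so `n ≥ |S|+|T| ≥ 4d + 2 > 4d` (resp. `≥ 2·(2.527d + 1) > 5d - 1`), contradiction.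
-/

open Finset

attribute [local instance] Classical.propDecidable

namespace CHAux

variable {V : Type*} [Fintype V]

/-- no directed triangle -/
def NoTri (E : V → V → Prop) : Prop := ∀ a b c, E a b → E b c → E c a → False

omit [Fintype V] in
lemma noTri_of_not_c3 {E : V → V → Prop} (hG : IsOrientedGraph E) (hc : ¬ HasCycle E 3) :
    NoTri E := by
  intro a b c hab hbc hca
  apply hc
  have hab' : a ≠ b := fun h => hG a b hab (by rw [← h] at hab; rw [h]; exact (h ▸ hab))
  have hbc' : b ≠ c := fun h => hG b c hbc (h ▸ hbc)
  have hac' : a ≠ c := fun h => hG c a hca (h ▸ hca)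
  refine ⟨fun i => if i = 0 then a else if i = 1 then b else c, ?_, ?_⟩
  · intro i j hij
    have hii := (show ∀ u : ZMod 3, u = 0 ∨ u = 1 ∨ u = 2 by decide) i
    have hjj := (show ∀ u : ZMod 3, u = 0 ∨ u = 1 ∨ u = 2 by decide) j
    rcases hii with rfl | rfl | rfl <;> rcases hjj with rfl | rfl | rfl <;>
      simp_all [show (1:ZMod 3) ≠ 0 by decide, show (2:ZMod 3) ≠ 0 by decide,
        show (2:ZMod 3) ≠ 1 by decide]
  · intro i
    have hii := (show ∀ u : ZMod 3, u = 0 ∨ u = 1 ∨ u = 2 by decide) i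
    rcases hii with rfl | rfl | rfl <;>
      simp [show (0:ZMod 3) + 1 = 1 by decide, show (1:ZMod 3) + 1 = 2 by decide,
        show (2:ZMod 3) + 1 = 0 by decide, show (1:ZMod 3) ≠ 0 by decide,
        show (2:ZMod 3) ≠ 0 by decide, show (2:ZMod 3) ≠ 1 by decide] <;>
      assumption

lemma outDeg_eq_card (E : V → V → Prop) (v : V) :
    outDeg E v = (univ.filter fun w => E v w).card := by
  rw [outDeg, Nat.card_eq_fintype_card, Fintype.card_subtype]

lemma inDeg_eq_card (E : V → V → Prop) (v : V) :
    inDeg E v = (univ.filter fun w => E w v).card := by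
  rw [inDeg, Nat.card_eq_fintype_card, Fintype.card_subtype]

lemma minSemi_le_out (E : V → V → Prop) (v : V) :
    minSemidegree E ≤ (univ.filter fun w => E v w).card := by
  rw [← outDeg_eq_card]
  exact le_trans (Nat.sInf_le ⟨v, rfl⟩) (min_le_left _ _)

lemma minSemi_le_in (E : V → V → Prop) (v : V) :
    minSemidegree E ≤ (univ.filter fun w => E w v).card := by
  rw [← inDeg_eq_card]
  exact le_trans (Nat.sInf_le ⟨v, rfl⟩) (min_le_right _ _)

omit [Fintype V] in
theorem sum_deg (E : V → V → Prop) (s : Finset V) :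
    ∑ v ∈ s, (s.filter fun w => E v w).card = ∑ v ∈ s, (s.filter fun w => E w v).card := by
  simp only [Finset.card_filter]
  rw [Finset.sum_comm]

/-- Caccetta–Häggkvist type lemma: a triangle-free oriented graph with minimum
outdegree `k ≥ 1` has at least `φ²·k + 1` vertices (here `g = √5`, and the bound is
written as `(3+g)k + 2 ≤ 2n`). -/
theorem CHL {E : V → V → Prop} (hG : IsOrientedGraph E) (hT : NoTri E)
    {g : ℝ} (hg5 : g * g = 5) (hg0 : 0 ≤ g) :
    ∀ s : Finset V, ∀ k : ℕ, 1 ≤ k → s.Nonempty →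
      (∀ v ∈ s, k ≤ (s.filter fun w => E v w).card) →
      (3 + g) * (k : ℝ) + 2 ≤ 2 * (s.card : ℝ) := by
  have hg3 : g ≤ 3 := by nlinarith
  intro s
  induction s using Finset.strongInduction with
  | _ s ih =>
    intro k hk hne hdeg
    obtain ⟨z, hzs, hzi⟩ : ∃ z ∈ s, k ≤ (s.filter fun w => E w z).card := by
      by_contra hcon
      push_neg at hcon
      have h1 : ∑ v ∈ s, (s.filter fun w => E w v).card < ∑ v ∈ s, k :=
        Finset.sum_lt_sum_of_nonempty hne fun v hv => hcon v hv
      have h2 : ∑ v ∈ s, k ≤ ∑ v ∈ s, (s.filter fun w => E v w).card :=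
        Finset.sum_le_sum hdeg
      rw [sum_deg] at h2
      omega
    set A := s.filter (fun w => E z w) with hA
    set B := s.filter (fun w => E w z) with hB
    have hAs : A ⊆ s := filter_subset _ _
    have hBs : B ⊆ s := filter_subset _ _
    have hka : k ≤ A.card := hdeg z hzs
    have hzA : z ∉ A := by
      simp only [hA, mem_filter]
      rintro ⟨-, h⟩; exact hG z z h h
    have hzB : z ∉ B := by
      simp only [hB, mem_filter]
      rintro ⟨-, h⟩; exact hG z z h h
    set R := ((s.erase z) \ A) \ B with hRdef
    have hAe : A ⊆ s.erase z := fun w hw => Finset.mem_erase.mpr ⟨fun h => hzA (h ▸ hw), hAs hw⟩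
    have hBe : B ⊆ (s.erase z) \ A := by
      intro w hw
      refine Finset.mem_sdiff.mpr ⟨Finset.mem_erase.mpr ⟨fun h => hzB (h ▸ hw), hBs hw⟩,
        fun hwA => ?_⟩
      exact hG z w (mem_filter.mp hwA).2 (mem_filter.mp hw).2
    have hcards : s.card = 1 + A.card + B.card + R.card := by
      have e0 : 1 ≤ s.card := card_pos.mpr ⟨z, hzs⟩
      have e1 : (s.erase z).card = s.card - 1 := Finset.card_erase_of_mem hzs
      have e2 : ((s.erase z) \ A).card = (s.erase z).card - A.card := card_sdiff_of_subset hAe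
      have e3 : R.card = ((s.erase z) \ A).card - B.card := card_sdiff_of_subset hBe
      have le1 : A.card ≤ (s.erase z).card := card_le_card hAe
      have le2 : B.card ≤ ((s.erase z) \ A).card := card_le_card hBe
      omega
    have hdegA : ∀ p ∈ A, k ≤ (A.filter fun w => E p w).card + R.card := by
      intro p hp
      have hpE : E z p := (mem_filter.mp hp).2
      have hsub : s.filter (fun w => E p w) ⊆ (A.filter fun w => E p w) ∪ R := by
        intro w hw
        obtain ⟨hws, hpw⟩ := mem_filter.mp hw
        by_cases hwA : w ∈ A
        · exact mem_union_left _ (mem_filter.mpr ⟨hwA, hpw⟩)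
        · refine mem_union_right _ ?_
          have hwz : w ≠ z := fun h => hG z p hpE (h ▸ hpw)
          have hwB : w ∉ B := by
            intro hwB; exact hT z p w hpE hpw (mem_filter.mp hwB).2
          exact mem_sdiff.mpr ⟨mem_sdiff.mpr ⟨mem_erase.mpr ⟨hwz, hws⟩, hwA⟩, hwB⟩
      calc k ≤ (s.filter fun w => E p w).card := hdeg p (hAs hp)
        _ ≤ ((A.filter fun w => E p w) ∪ R).card := card_le_card hsub
        _ ≤ _ := card_union_le _ _
    by_cases hcase : k ≤ R.card
    · have h3k : 3 * k + 1 ≤ s.card := by omega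
      have c1 : 3 * (k : ℝ) + 1 ≤ (s.card : ℝ) := by exact_mod_cast h3k
      have ck : (1:ℝ) ≤ (k:ℝ) := by exact_mod_cast hk
      nlinarith
    · push_neg at hcase
      have hk' : 1 ≤ k - R.card := by omega
      have hAne : A.Nonempty := card_pos.mp (by omega)
      have hAss : A ⊂ s := ⟨hAs, fun hsubA => hzA (hsubA hzs)⟩
      have IH := ih A hAss (k - R.card) hk' hAne (fun p hp => by have := hdegA p hp; omega)
      have hcast : ((k - R.card : ℕ) : ℝ) = (k : ℝ) - (R.card : ℝ) := by
        have h := hcase.le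
        push_cast [Nat.cast_sub h]
        ring
      rw [hcast] at IH
      have hb : (k:ℝ) ≤ (B.card : ℝ) := by exact_mod_cast hzi
      have ha : (k:ℝ) ≤ (A.card : ℝ) := by exact_mod_cast hka
      have hnr : (s.card : ℝ) = 1 + A.card + B.card + R.card := by exact_mod_cast hcards
      nlinarith [IH, ha, hb, hnr, hg5, hg0,
        mul_le_mul_of_nonneg_left ha (by nlinarith : (0:ℝ) ≤ 2 + 2*g),
        mul_le_mul_of_nonneg_left hb (by nlinarith : (0:ℝ) ≤ 6 + 2*g)]

omit [Fintype V] in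
/-- a (not necessarily injective) walk of length ℓ from x to y -/
def IsWalk (E : V → V → Prop) (f : ℕ → V) (ℓ : ℕ) (x y : V) : Prop :=
  f 0 = x ∧ f ℓ = y ∧ ∀ i < ℓ, E (f i) (f (i + 1))

/-- out-ball of radius t around x -/
noncomputable def RS (E : V → V → Prop) (x : V) (t : ℕ) : Finset V :=
  univ.filter (fun z => ∃ ℓ ≤ t, ∃ f : ℕ → V, IsWalk E f ℓ x z)

lemma mem_RS {E : V → V → Prop} {x z : V} {t : ℕ} :
    z ∈ RS E x t ↔ ∃ ℓ ≤ t, ∃ f : ℕ → V, IsWalk E f ℓ x z := by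
  simp [RS]

lemma mem_RS_self (E : V → V → Prop) (x : V) (t : ℕ) : x ∈ RS E x t :=
  mem_RS.mpr ⟨0, Nat.zero_le _, fun _ => x, rfl, rfl, fun i hi => absurd hi (Nat.not_lt_zero i)⟩

lemma RS_closed {E : V → V → Prop} {x z w : V} {t : ℕ}
    (hz : z ∈ RS E x t) (hzw : E z w) : w ∈ RS E x (t + 1) := by
  obtain ⟨ℓ, hℓ, f, h0, hz', he⟩ := mem_RS.mp hz
  refine mem_RS.mpr ⟨ℓ + 1, by omega, fun i => if i ≤ ℓ then f i else w, ?_, ?_, ?_⟩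
  · simp [h0]
  · simp
  · intro i hi
    show E (if i ≤ ℓ then f i else w) (if i + 1 ≤ ℓ then f (i+1) else w)
    by_cases hiℓ : i < ℓ
    · have e1 : (if i ≤ ℓ then f i else w) = f i := if_pos (by omega)
      have e2 : (if i + 1 ≤ ℓ then f (i+1) else w) = f (i+1) := if_pos (by omega)
      rw [e1, e2]; exact he i hiℓ
    · have hieq : i = ℓ := by omega
      subst hieq
      have e1 : (if i ≤ i then f i else w) = f i := if_pos (le_refl _)
      have e2 : (if i + 1 ≤ i then f (i+1) else w) = w := if_neg (by omega)
      rw [e1, e2, hz']; exact hzw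

lemma RS_out_sub {E : V → V → Prop} {x v : V} {t : ℕ} (hv : v ∈ RS E x t) :
    (univ.filter fun w => E v w) ⊆ RS E x (t + 1) := by
  intro w hw
  exact RS_closed hv (mem_filter.mp hw).2

lemma RS_mono {E : V → V → Prop} {x : V} {t : ℕ} : RS E x t ⊆ RS E x (t + 1) := by
  intro z hz
  obtain ⟨ℓ, hℓ, f, hwalk⟩ := mem_RS.mp hz
  exact mem_RS.mpr ⟨ℓ, by omega, f, hwalk⟩

lemma RS_base {E : V → V → Prop} (hG : IsOrientedGraph E) {d : ℕ}
    (hd : ∀ v, d ≤ (univ.filter fun w => E v w).card) (x : V) :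
    d + 1 ≤ (RS E x 1).card := by
  have hsub : insert x (univ.filter fun w => E x w) ⊆ RS E x 1 := by
    intro w hw
    rcases mem_insert.mp hw with h | h
    · exact h ▸ mem_RS_self E x 1
    · exact RS_closed (mem_RS_self E x 0) (mem_filter.mp h).2
  have hnx : x ∉ (univ.filter fun w => E x w) := by
    simp only [mem_filter]
    rintro ⟨-, h⟩; exact hG x x h h
  calc d + 1 ≤ (univ.filter fun w => E x w).card + 1 := by have := hd x; omega
    _ = (insert x (univ.filter fun w => E x w)).card := (card_insert_of_notMem hnx).symm
    _ ≤ _ := card_le_card hsub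

/-- Ball growth step -/
theorem BSL {E : V → V → Prop} (hG : IsOrientedGraph E) (hT : NoTri E)
    {g : ℝ} (hg5 : g * g = 5) (hg0 : 0 ≤ g) {d : ℕ}
    (hd : ∀ v, d ≤ (univ.filter fun w => E v w).card) (x : V) (t : ℕ) :
    (1 + g) * ((RS E x t).card : ℝ) + (3 + g) * (d : ℝ) + 2
      ≤ (3 + g) * ((RS E x (t+1)).card : ℝ) := by
  set s := RS E x t with hs
  set s' := RS E x (t+1) with hs'
  have hsub : s ⊆ s' := RS_mono
  have hm : (s' \ s).card + s.card = s'.card := Finset.card_sdiff_add_card_eq_card hsub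
  set m := (s' \ s).card with hmdef
  have hkey : ∀ v ∈ s, d ≤ (s.filter fun w => E v w).card + m := by
    intro v hv
    have h1 : (univ.filter fun w => E v w) ⊆ s' := RS_out_sub hv
    have h2 : ((univ.filter fun w => E v w) ∩ s).card + ((univ.filter fun w => E v w) \ s).card
        = (univ.filter fun w => E v w).card := Finset.card_inter_add_card_sdiff _ _
    have h3 : (univ.filter fun w => E v w) ∩ s = s.filter fun w => E v w := by
      ext w; simp [mem_filter, mem_inter, and_comm]
    have h3' : ((univ.filter fun w => E v w) ∩ s).card = (s.filter fun w => E v w).card := by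
      rw [h3]
    have h4 : (univ.filter fun w => E v w) \ s ⊆ s' \ s :=
      fun w hw => mem_sdiff.mpr ⟨h1 (mem_sdiff.mp hw).1, (mem_sdiff.mp hw).2⟩
    have h5 : ((univ.filter fun w => E v w) \ s).card ≤ m := card_le_card h4
    have h6 := hd v
    omega
  have hsne : (1:ℕ) ≤ s.card := card_pos.mpr ⟨x, mem_RS_self E x t⟩
  by_cases hcase : d ≤ m
  · have hcard : (s.card : ℝ) + (d : ℝ) ≤ (s'.card : ℝ) := by
      have : s.card + d ≤ s'.card := by omega
      exact_mod_cast this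
    have h1 : (1:ℝ) ≤ (s.card : ℝ) := by exact_mod_cast hsne
    nlinarith
  · push_neg at hcase
    have hCHL := CHL hG hT hg5 hg0 s (d - m) (by omega) ⟨x, mem_RS_self E x t⟩
      (fun v hv => by have := hkey v hv; omega)
    have hcast : ((d - m : ℕ) : ℝ) = (d : ℝ) - (m : ℝ) := by
      have h := hcase.le
      push_cast [Nat.cast_sub h]
      ring
    rw [hcast] at hCHL
    have hcard : (s'.card : ℝ) = (s.card : ℝ) + (m : ℝ) := by
      have : s'.card = s.card + m := by omega
      exact_mod_cast this
    nlinarith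

/-- Iterated growth: explicit lower bounds on balls of radius 3 and 7. -/
theorem rows {E' : V → V → Prop} (hG' : IsOrientedGraph E') (hT' : NoTri E')
    {g : ℝ} (hg5 : g * g = 5) (hg0 : 0 ≤ g) {d : ℕ}
    (hd : ∀ v, d ≤ (univ.filter fun w => E' v w).card) (x : V) :
    ((14+6*g) + (28+12*g) * (d:ℝ) ≤ (14+6*g) * ((RS E' x 3).card : ℝ)) ∧
    ((10304+4608*g) + (26048+11648*g) * (d:ℝ) ≤ (10304+4608*g) * ((RS E' x 7).card : ℝ)) := by
  have h1g : (0:ℝ) ≤ 1 + g := by linarith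
  have hg5d : g * g * (d:ℝ) = 5 * (d:ℝ) := by rw [hg5]
  have row1 : (1:ℝ) + 1 * (d:ℝ) ≤ 1 * ((RS E' x 1).card : ℝ) := by
    have h0 := RS_base hG' hd x
    have h : ((d:ℕ):ℝ) + 1 ≤ ((RS E' x 1).card : ℝ) := by exact_mod_cast h0
    linarith
  have hg5s2 : g * g * ((RS E' x 2).card : ℝ) = 5 * ((RS E' x 2).card : ℝ) := by rw [hg5]
  have hc1 : (0:ℝ) ≤ 1 := by linarith
  have row2 : ((3+g) : ℝ) + (4+2*g) * (d:ℝ) ≤ (3+g) * ((RS E' x 2).card : ℝ) := by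
    linarith [mul_le_mul_of_nonneg_left (BSL hG' hT' hg5 hg0 hd x 1) hc1,
      mul_le_mul_of_nonneg_left row1 h1g, hg5s2, hg5d, hg5]
  have hg5s3 : g * g * ((RS E' x 3).card : ℝ) = 5 * ((RS E' x 3).card : ℝ) := by rw [hg5]
  have hc2 : (0:ℝ) ≤ (3+g) := by linarith
  have row3 : ((14+6*g) : ℝ) + (28+12*g) * (d:ℝ) ≤ (14+6*g) * ((RS E' x 3).card : ℝ) := by
    linarith [mul_le_mul_of_nonneg_left (BSL hG' hT' hg5 hg0 hd x 2) hc2,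
      mul_le_mul_of_nonneg_left row2 h1g, hg5s3, hg5d, hg5]
  have hg5s4 : g * g * ((RS E' x 4).card : ℝ) = 5 * ((RS E' x 4).card : ℝ) := by rw [hg5]
  have hc3 : (0:ℝ) ≤ (14+6*g) := by linarith
  have row4 : ((72+32*g) : ℝ) + (160+72*g) * (d:ℝ) ≤ (72+32*g) * ((RS E' x 4).card : ℝ) := by
    linarith [mul_le_mul_of_nonneg_left (BSL hG' hT' hg5 hg0 hd x 3) hc3,
      mul_le_mul_of_nonneg_left row3 h1g, hg5s4, hg5d, hg5]
  have hg5s5 : g * g * ((RS E' x 5).card : ℝ) = 5 * ((RS E' x 5).card : ℝ) := by rw [hg5]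
  have hc4 : (0:ℝ) ≤ (72+32*g) := by linarith
  have row5 : ((376+168*g) : ℝ) + (896+400*g) * (d:ℝ) ≤ (376+168*g) * ((RS E' x 5).card : ℝ) := by
    linarith [mul_le_mul_of_nonneg_left (BSL hG' hT' hg5 hg0 hd x 4) hc4,
      mul_le_mul_of_nonneg_left row4 h1g, hg5s5, hg5d, hg5]
  have hg5s6 : g * g * ((RS E' x 6).card : ℝ) = 5 * ((RS E' x 6).card : ℝ) := by rw [hg5]
  have hc5 : (0:ℝ) ≤ (376+168*g) := by linarith
  have row6 : ((1968+880*g) : ℝ) + (4864+2176*g) * (d:ℝ) ≤ (1968+880*g) * ((RS E' x 6).card : ℝ) := by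
    linarith [mul_le_mul_of_nonneg_left (BSL hG' hT' hg5 hg0 hd x 5) hc5,
      mul_le_mul_of_nonneg_left row5 h1g, hg5s6, hg5d, hg5]
  have hg5s7 : g * g * ((RS E' x 7).card : ℝ) = 5 * ((RS E' x 7).card : ℝ) := by rw [hg5]
  have hc6 : (0:ℝ) ≤ (1968+880*g) := by linarith
  have row7 : ((10304+4608*g) : ℝ) + (26048+11648*g) * (d:ℝ) ≤ (10304+4608*g) * ((RS E' x 7).card : ℝ) := by
    linarith [mul_le_mul_of_nonneg_left (BSL hG' hT' hg5 hg0 hd x 6) hc6,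
      mul_le_mul_of_nonneg_left row6 h1g, hg5s7, hg5d, hg5]
  exact ⟨row3, row7⟩

lemma walk_rev {E : V → V → Prop} {f : ℕ → V} {ℓ : ℕ} {y z : V}
    (h : IsWalk (fun a b => E b a) f ℓ y z) : IsWalk E (fun i => f (ℓ - i)) ℓ z y := by
  obtain ⟨h0, hℓ, he⟩ := h
  refine ⟨by simpa using hℓ, by simpa using h0, ?_⟩
  intro i hi
  have hj : ℓ - i - 1 < ℓ := by omega
  have := he (ℓ - i - 1) hj
  have e1 : ℓ - i - 1 + 1 = ℓ - i := by omega
  have e2 : ℓ - (i + 1) = ℓ - i - 1 := by omega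
  rw [e1] at this
  show E (f (ℓ - i)) (f (ℓ - (i+1)))
  rw [e2]
  exact this

lemma walk_concat {E : V → V → Prop} {f h : ℕ → V} {ℓ₁ ℓ₂ : ℕ} {x z y : V}
    (hf : IsWalk E f ℓ₁ x z) (hh : IsWalk E h ℓ₂ z y) :
    IsWalk E (fun i => if i ≤ ℓ₁ then f i else h (i - ℓ₁)) (ℓ₁ + ℓ₂) x y := by
  obtain ⟨hf0, hfℓ, hfe⟩ := hf
  obtain ⟨hh0, hhℓ, hhe⟩ := hh
  refine ⟨by simp [hf0], ?_, ?_⟩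
  · by_cases hc : ℓ₁ + ℓ₂ ≤ ℓ₁
    · have h2 : ℓ₂ = 0 := by omega
      subst h2
      simp only [Nat.add_zero, if_pos le_rfl]
      rw [hfℓ, ← hh0]
      exact hhℓ
    · simp only [if_neg hc]
      have : ℓ₁ + ℓ₂ - ℓ₁ = ℓ₂ := by omega
      rw [this, hhℓ]
  · intro i hi
    show E (if i ≤ ℓ₁ then f i else h (i - ℓ₁)) (if i + 1 ≤ ℓ₁ then f (i+1) else h (i + 1 - ℓ₁))
    by_cases hc1 : i + 1 ≤ ℓ₁
    · rw [if_pos (by omega : i ≤ ℓ₁), if_pos hc1]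
      exact hfe i (by omega)
    · rw [if_neg hc1]
      by_cases hc2 : i ≤ ℓ₁
      · have hie : i = ℓ₁ := by omega
        subst hie
        rw [if_pos le_rfl]
        have : i + 1 - i = 1 := by omega
        rw [this, hfℓ, ← hh0]
        exact hh0 ▸ hhe 0 (by omega)
      · rw [if_neg hc2]
        have e1 : i + 1 - ℓ₁ = (i - ℓ₁) + 1 := by omega
        rw [e1]
        exact hhe (i - ℓ₁) (by omega)

omit [Fintype V] in
lemma walk_to_path {E : V → V → Prop} {x y : V} {ℓ : ℕ}
    (hw : ∃ f, IsWalk E f ℓ x y) : ∃ t ≤ ℓ, HasPath E t x y := by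
  classical
  set Q := fun m => ∃ f : ℕ → V, IsWalk E f m x y with hQdef
  have hQ : ∃ m, Q m := ⟨ℓ, hw⟩
  set m₀ := Nat.find hQ with hm₀def
  obtain ⟨f, hf0, hfm, hfe⟩ := Nat.find_spec hQ
  have hle : m₀ ≤ ℓ := Nat.find_le hw
  have hy : ∀ i < m₀, f i ≠ y := by
    intro i hi hiy
    exact Nat.find_min hQ hi ⟨f, hf0, hiy, fun j hj => hfe j (by omega)⟩
  have hinj : ∀ i ≤ m₀, ∀ j ≤ m₀, i < j → f i ≠ f j := by
    intro i hi j hj hij heq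
    rcases eq_or_lt_of_le hj with hj' | hj'
    · exact hy i (by omega) (by rw [heq, hj', hfm])
    · set e := j - i with hedef
      have he1 : 1 ≤ e := by omega
      refine Nat.find_min hQ (show m₀ - e < m₀ by omega)
        ⟨fun t => if t ≤ i then f t else f (t + e), ?_, ?_, ?_⟩
      · simp [hf0]
      · have hgt : ¬ (m₀ - e ≤ i) := by omega
        simp only [if_neg hgt]
        have : m₀ - e + e = m₀ := by omega
        rw [this, hfm]
      · intro t ht
        show E (if t ≤ i then f t else f (t + e)) (if t + 1 ≤ i then f (t+1) else f (t + 1 + e))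
        by_cases hc1 : t + 1 ≤ i
        · rw [if_pos (by omega), if_pos hc1]
          exact hfe t (by omega)
        · rw [if_neg hc1]
          by_cases hc2 : t ≤ i
          · have hte : t = i := by omega
            subst hte
            rw [if_pos le_rfl]
            have e2 : t + 1 + e = j + 1 := by omega
            rw [e2, heq]
            exact hfe j (by omega)
          · rw [if_neg hc2]
            have e3 : t + 1 + e = (t + e) + 1 := by omega
            rw [e3]
            exact hfe (t + e) (by omega)
  refine ⟨m₀, hle, fun i => f i.val, ?_, ?_, ?_, ?_⟩
  · intro i j hij
    rcases lt_trichotomy i.val j.val with h | h | h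
    · exact absurd hij (hinj i.val (by omega) j.val (by omega) h)
    · exact Fin.ext h
    · exact absurd hij.symm (hinj j.val (by omega) i.val (by omega) h)
  · simpa using hf0
  · simpa using hfm
  · intro i
    have := hfe i.val i.isLt
    simpa using this

/-- balls around x (forward) and y (backward) are disjoint if there is no short path -/
lemma balls_disjoint {E : V → V → Prop} {x y : V} {N a b : ℕ}
    (hno : ∀ t, t ≤ N → ¬ HasPath E t x y) (hab : a + b ≤ N) :
    Disjoint (RS E x a) (RS (fun u v => E v u) y b) := by
  rw [Finset.disjoint_left]
  intro z hz1 hz2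
  obtain ⟨ℓ₁, hℓ₁, f, hf⟩ := mem_RS.mp hz1
  obtain ⟨ℓ₂, hℓ₂, p, hp⟩ := mem_RS.mp hz2
  have hrev := walk_rev hp
  have hcat := walk_concat hf hrev
  obtain ⟨t, ht, hpath⟩ := walk_to_path ⟨_, hcat⟩
  exact hno t (by omega) hpath

end CHAux

theorem triangle_or_small_diameter (V : Type*) [Fintype V] (E : V → V → Prop)
    (hG : IsOrientedGraph E) :
    (((Fintype.card V : ℚ) / 4 ≤ (minSemidegree E : ℚ)) →
      HasCycle E 3 ∨ ∀ x y : V, x ≠ y → ∃ t, t ≤ 6 ∧ HasPath E t x y) ∧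
    (((Fintype.card V : ℚ) / 5 < (minSemidegree E : ℚ)) →
      HasCycle E 3 ∨ ∀ x y : V, x ≠ y → ∃ t, t ≤ 50 ∧ HasPath E t x y) := by
  classical
  open CHAux in
  have hg5 : Real.sqrt 5 * Real.sqrt 5 = 5 := Real.mul_self_sqrt (by norm_num)
  have hg0 : (0:ℝ) ≤ Real.sqrt 5 := Real.sqrt_nonneg 5
  set g := Real.sqrt 5
  have hG' : IsOrientedGraph (fun a b => E b a) := fun a b h h' => hG a b h' h
  have hdo : ∀ v, minSemidegree E ≤ (Finset.univ.filter fun w => E v w).card :=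
    CHAux.minSemi_le_out E
  have hdi : ∀ v : V, minSemidegree E ≤ (Finset.univ.filter fun w => E w v).card :=
    CHAux.minSemi_le_in E
  constructor
  · -- part (i)
    intro hq
    by_cases hc : HasCycle E 3
    · exact Or.inl hc
    refine Or.inr fun x y hxy => ?_
    by_contra hno
    push_neg at hno
    have hT : CHAux.NoTri E := CHAux.noTri_of_not_c3 hG hc
    have hT' : CHAux.NoTri (fun a b => E b a) := fun a b c h1 h2 h3 => hT a c b h3 h2 h1
    have hn4 : Fintype.card V ≤ 4 * minSemidegree E := by
      rw [div_le_iff₀ (by norm_num : (0:ℚ) < 4)] at hq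
      exact_mod_cast le_trans hq (le_of_eq (mul_comm _ _))
    obtain ⟨r3x, -⟩ := CHAux.rows hG hT hg5 hg0 hdo x
    obtain ⟨r3y, -⟩ := CHAux.rows hG' hT' hg5 hg0 hdi y
    have hdisj := CHAux.balls_disjoint (E := E) (x := x) (y := y) (N := 6) hno
      (by norm_num : 3 + 3 ≤ 6)
    have hsum : (CHAux.RS E x 3).card + (CHAux.RS (fun u v => E v u) y 3).card
        ≤ Fintype.card V := by
      rw [← Finset.card_union_of_disjoint hdisj]
      exact Finset.card_le_univ _
    have hsumR : ((CHAux.RS E x 3).card : ℝ) + ((CHAux.RS (fun u v => E v u) y 3).card : ℝ)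
        ≤ 4 * (minSemidegree E : ℝ) := by
      have h1 : ((CHAux.RS E x 3).card : ℝ) + ((CHAux.RS (fun u v => E v u) y 3).card : ℝ)
          ≤ (Fintype.card V : ℝ) := by exact_mod_cast hsum
      have h2 : (Fintype.card V : ℝ) ≤ 4 * (minSemidegree E : ℝ) := by exact_mod_cast hn4
      linarith
    have h14 : (0:ℝ) ≤ 14 + 6*g := by linarith
    linarith [mul_le_mul_of_nonneg_left hsumR h14, r3x, r3y]
  · -- part (ii)
    intro hq
    by_cases hc : HasCycle E 3
    · exact Or.inl hc
    refine Or.inr fun x y hxy => ?_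
    by_contra hno
    push_neg at hno
    have hT : CHAux.NoTri E := CHAux.noTri_of_not_c3 hG hc
    have hT' : CHAux.NoTri (fun a b => E b a) := fun a b c h1 h2 h3 => hT a c b h3 h2 h1
    have hn5 : Fintype.card V + 1 ≤ 5 * minSemidegree E := by
      rw [div_lt_iff₀ (by norm_num : (0:ℚ) < 5)] at hq
      have : (Fintype.card V : ℚ) < 5 * minSemidegree E := lt_of_lt_of_eq hq (mul_comm _ _)
      have h2 : Fintype.card V < 5 * minSemidegree E := by exact_mod_cast this
      omega
    obtain ⟨-, r7x⟩ := CHAux.rows hG hT hg5 hg0 hdo x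
    obtain ⟨-, r7y⟩ := CHAux.rows hG' hT' hg5 hg0 hdi y
    have hdisj := CHAux.balls_disjoint (E := E) (x := x) (y := y) (N := 50) hno
      (by norm_num : 7 + 7 ≤ 50)
    have hsum : (CHAux.RS E x 7).card + (CHAux.RS (fun u v => E v u) y 7).card
        ≤ Fintype.card V := by
      rw [← Finset.card_union_of_disjoint hdisj]
      exact Finset.card_le_univ _
    have hsumR : ((CHAux.RS E x 7).card : ℝ) + ((CHAux.RS (fun u v => E v u) y 7).card : ℝ)
        ≤ 5 * (minSemidegree E : ℝ) - 1 := by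
      have h1 : ((CHAux.RS E x 7).card : ℝ) + ((CHAux.RS (fun u v => E v u) y 7).card : ℝ)
          ≤ (Fintype.card V : ℝ) := by exact_mod_cast hsum
      have h2 : (Fintype.card V : ℝ) + 1 ≤ 5 * (minSemidegree E : ℝ) := by exact_mod_cast hn5
      linarith
    have h14 : (0:ℝ) ≤ 10304 + 4608*g := by linarith
    have hgd : g * g * (minSemidegree E : ℝ) = 5 * (minSemidegree E : ℝ) := by rw [hg5]
    have hg2 : (2:ℝ) ≤ g := by nlinarith
    linarith [mul_le_mul_of_nonneg_left hsumR h14, r7x, r7y, hgd,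
      mul_nonneg hg0 (Nat.cast_nonneg (minSemidegree E))]
end
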